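/- arXiv:math/9811191 — 10 statements merged into one kernel-verified Lean document; each statement's English description precedes it below -/
import Mathlib

section
/- (Petr) Let f ∈ F_q[x] be a polynomial of degree d ≥ 1 with distinct monic irreducible factors f_1, …, f_k of degrees d_1, …, d_k, and let R = F_q[x]/(f). Let F be the F_q-linear endomorphism of R induced by h ↦ h^q. Then in F_q[T] one has det(1_R - T·F) = ∏_{i=1}^{k} (1 - T^{d_i}), where det(1_R - T·F) denotes the determinant over F_q[T] of the matrix I - T·M for M the matrix of F in any F_q-basis of R (equivalently, the reverse characteristic polynomial of F). -/
/-!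
Let `P = ∏ᵢ 𝔽_q[x]/(fᵢ)`. By the Chinese remainder theorem `R → P` is surjective, and its
kernel consists of nilpotents, since `f` divides a power of any polynomial divisible by every
`fᵢ`. Frobenius commutes with this map, is injective on the reduced ring `P` and nilpotent on
the kernel, so the Fitting decomposition of `F` gives
`charpoly F = X ^ m * charpoly (Frobenius on P)`. On the field `𝔽_q[x]/(fᵢ)` of degree `dᵢ` the
Frobenius has minimal polynomial `X ^ dᵢ - 1`, hence this is also its characteristic
polynomial. Taking reverses, `X ^ m` disappears and each `X ^ dᵢ - 1` becomes `1 - T ^ dᵢ`.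
-/

open Polynomial Module LinearMap FiniteField

namespace LinearMap

variable {K V : Type*} [Field K] [AddCommGroup V] [Module K V]

theorem charpoly_eq_mul_of_isCompl [FiniteDimensional K V] (φ : End K V) {p q : Submodule K V}
    (h : IsCompl p q) (hp : ∀ x ∈ p, φ x ∈ p) (hq : ∀ x ∈ q, φ x ∈ q) :
    φ.charpoly = (φ.restrict hp).charpoly * (φ.restrict hq).charpoly := by
  let e := Submodule.prodEquivOfIsCompl p q h
  have hconj : e.conj ((φ.restrict hp).prodMap (φ.restrict hq)) = φ := by
    apply ((Free.chooseBasis K p).prod (Free.chooseBasis K q)).map e |>.ext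
    simp [e, LinearEquiv.conj_apply]
  rw [← charpoly_prodMap, ← e.charpoly_conj, hconj]

theorem charpoly_pi {k : ℕ} {M : Fin k → Type*} [∀ i, AddCommGroup (M i)]
    [∀ i, Module K (M i)] [∀ i, FiniteDimensional K (M i)] (φ : ∀ i, End K (M i)) :
    (LinearMap.pi fun i => φ i ∘ₗ proj i).charpoly = ∏ i, (φ i).charpoly := by
  induction k with
  | zero =>
    rw [Finset.univ_eq_empty, Finset.prod_empty, ← (charpoly_monic _).natDegree_eq_zero,
      charpoly_natDegree, finrank_zero_of_subsingleton]
  | succ k ih =>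
    have hconj : (Fin.consLinearEquiv K M).conj
        ((φ 0).prodMap (LinearMap.pi fun i => φ i.succ ∘ₗ proj i)) =
        LinearMap.pi fun i => φ i ∘ₗ proj i := by
      ext i x j
      refine Fin.cases ?_ (fun j => ?_) j <;> simp [Fin.tail]
    rw [← hconj, LinearEquiv.charpoly_conj, charpoly_prodMap, ih, Fin.prod_univ_succ]

theorem charpoly_eq_X_pow_mul_of_surjective [FiniteDimensional K V] {W : Type*} [AddCommGroup W]
    [Module K W] [FiniteDimensional K W] {φ : End K V} {ψ : End K W} {π : V →ₗ[K] W}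
    (hπ : Function.Surjective π) (hcomm : π ∘ₗ φ = ψ ∘ₗ π)
    (hψ : Function.Injective ψ) (hnil : ∀ x ∈ ker π, ∃ m, (φ ^ m) x = 0) :
    φ.charpoly = X ^ finrank K (ker π) * ψ.charpoly := by
  obtain ⟨n, hcompl, hstab⟩ :=
    (φ.eventually_isCompl_ker_pow_range_pow.and φ.eventually_iSup_ker_pow_eq).exists
  have hφn : ∀ x, (φ ^ n) (φ x) = φ ((φ ^ n) x) := fun x => by
    rw [← Module.End.mul_apply, ← pow_succ, pow_succ', Module.End.mul_apply]
  have hker : ker π = ker (φ ^ n) := by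
    refine le_antisymm (fun x hx => ?_) (fun x hx => ?_)
    · obtain ⟨m, hm⟩ := hnil x hx
      exact hstab ▸ Submodule.mem_iSup_of_mem m hm
    · have h := LinearMap.congr_fun (Module.End.commute_pow_left_of_commute hcomm.symm n) x
      rw [comp_apply, comp_apply, mem_ker.1 hx, map_zero, Module.End.coe_pow] at h
      exact hψ.iterate n (h.trans (iterate_map_zero ψ n).symm)
  have hφker : ∀ x ∈ ker (φ ^ n), φ x ∈ ker (φ ^ n) := fun x hx => by
    rw [mem_ker, hφn, mem_ker.1 hx, map_zero]
  have hφrange : ∀ x ∈ range (φ ^ n), φ x ∈ range (φ ^ n) := by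
    rintro _ ⟨y, rfl⟩
    exact ⟨φ y, hφn y⟩
  have hnilp : IsNilpotent (φ.restrict hφker) := ⟨n, LinearMap.ext fun x =>
    Subtype.ext (by rw [Module.End.pow_restrict, restrict_apply]; exact x.2)⟩
  -- `e` is `π` restricted to `range (φ ^ n)`, definitionally.
  let e : range (φ ^ n) ≃ₗ[K] W :=
    (Submodule.quotientEquivOfIsCompl _ _ (hker ▸ hcompl)).symm ≪≫ₗ
      π.quotKerEquivOfSurjective hπ
  have hconj : e.conj (φ.restrict hφrange) = ψ := by
    ext w
    obtain ⟨x, rfl⟩ := e.surjective w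
    rw [LinearEquiv.conj_apply, comp_apply, comp_apply, LinearEquiv.coe_coe, LinearEquiv.coe_coe,
      e.symm_apply_apply]
    exact LinearMap.congr_fun hcomm x
  rw [charpoly_eq_mul_of_isCompl φ hcompl hφker hφrange, hnilp.charpoly_eq_X_pow_finrank, hker,
    ← hconj, e.charpoly_conj]

end LinearMap

namespace FiniteField

variable (K : Type*) [Field K] [Fintype K]

theorem charpoly_frobeniusAlgHom (L : Type*) [Field L] [Algebra K L] [FiniteDimensional K L] :
    (frobeniusAlgHom K L).toLinearMap.charpoly = X ^ finrank K L - 1 := by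
  have : Finite L := Module.finite_of_finite K
  rw [← minpoly_frobeniusAlgHom]
  refine eq_of_monic_of_dvd_of_natDegree_le (minpoly.monic (Algebra.IsIntegral.isIntegral _))
    (charpoly_monic _) (minpoly_dvd_charpoly _) ?_
  rw [charpoly_natDegree, minpoly_frobeniusAlgHom, ← C_1, natDegree_X_pow_sub_C]

theorem frobeniusAlgHom_pi {ι : Type*} (A : ι → Type*) [∀ i, CommRing (A i)]
    [∀ i, Algebra K (A i)] : (frobeniusAlgHom K (∀ i, A i)).toLinearMap =
      LinearMap.pi fun i => (frobeniusAlgHom K (A i)).toLinearMap ∘ₗ proj i :=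
  rfl

theorem frobeniusAlgHom_injective (R : Type*) [CommRing R] [Algebra K R] [IsReduced R] :
    Function.Injective (frobeniusAlgHom K R) :=
  (injective_iff_map_eq_zero _).2 fun x hx => IsReduced.eq_zero x ⟨_, hx⟩

theorem exists_frobeniusAlgHom_pow_apply_eq_zero {R : Type*} [CommRing R] [Algebra K R] {x : R}
    (hx : IsNilpotent x) : ∃ m, ((frobeniusAlgHom K R).toLinearMap ^ m) x = 0 := by
  obtain ⟨n, hn⟩ := hx
  refine ⟨n, ?_⟩
  rw [Module.End.coe_pow, AlgHom.coe_toLinearMap, coe_frobeniusAlgHom, pow_iterate]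
  exact pow_eq_zero_of_le (Nat.lt_pow_self Fintype.one_lt_card).le hn

end FiniteField

namespace Polynomial

variable {K : Type*} [Field K]

theorem exists_dvd_pow_of_forall_monic_irreducible_dvd {f g : K[X]} (hf : f ≠ 0)
    (h : ∀ p : K[X], p.Monic → Irreducible p → p ∣ f → p ∣ g) : ∃ n, f ∣ g ^ n := by
  classical
  rcases eq_or_ne g 0 with rfl | hg
  · exact ⟨1, by simp⟩
  open UniqueFactorizationMonoid in
  rw [exists_dvd_pow_iff_radical_dvd hf, radical_dvd_iff_primeFactors_subset hg]
  intro p hp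
  rw [mem_primeFactors, mem_normalizedFactors_iff' hf] at hp
  obtain ⟨hirr, hnorm, hpf⟩ := hp
  rw [mem_primeFactors, mem_normalizedFactors_iff' hg]
  exact ⟨hirr, hnorm, h p (hnorm ▸ monic_normalize hirr.ne_zero) hirr hpf⟩

theorem Monic.isCoprime_of_irreducible_of_ne {p q : K[X]} (hp : p.Monic) (hq : q.Monic)
    (hpi : Irreducible p) (hqi : Irreducible q) (hne : p ≠ q) : IsCoprime p q :=
  hpi.coprime_iff_not_dvd.2 fun hdvd =>
    hne (eq_of_monic_of_associated hp hq (hpi.associated_of_dvd hqi hdvd))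

theorem reverse_prod {R ι : Type*} [CommSemiring R] [NoZeroDivisors R] (s : Finset ι)
    (g : ι → R[X]) : (∏ i ∈ s, g i).reverse = ∏ i ∈ s, (g i).reverse := by
  classical
  induction s using Finset.induction with
  | empty => simpa using reverse_C (1 : R)
  | insert a s ha ih =>
    rw [Finset.prod_insert ha, reverse_mul_of_domain, ih, Finset.prod_insert ha]

theorem reverse_X_pow_sub_one {R : Type*} [Ring R] [Nontrivial R] (n : ℕ) :
    (X ^ n - 1 : R[X]).reverse = 1 - X ^ n := by
  have : (X ^ n : R[X]).reverse = 1 := by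
    rw [← mul_one (X ^ n), reverse_X_pow_mul, ← C_1, reverse_C]
  rw [sub_eq_add_neg, ← C_1, ← C_neg, reverse_add_C, natDegree_X_pow, this, C_neg, C_1,
    neg_one_mul, sub_eq_add_neg]

end Polynomial

namespace AdjoinRoot

variable {R : Type*} [CommRing R]

theorem algHomOfDvd_mk {f g : R[X]} (h : g ∣ f) (p : R[X]) :
    algHomOfDvd R f g h (mk f p) = mk g p := by
  rw [← aeval_eq, ← aeval_eq, ← aeval_algHom_apply, algHomOfDvd_root]

variable {K ι : Type*} [Field K] {f : K[X]} {g : ι → K[X]}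

theorem pi_algHomOfDvd_surjective [Finite ι] (hg : ∀ i, g i ∣ f)
    (hcop : Pairwise fun i j => IsCoprime (g i) (g j)) :
    Function.Surjective (AlgHom.pi fun i => algHomOfDvd K f (g i) (hg i)) := fun t => by
  obtain ⟨r, hr⟩ := Ideal.pi_quotient_surjective
    (fun i j hij => (Ideal.isCoprime_span_singleton_iff _ _).2 (hcop hij)) t
  exact ⟨mk f r, funext fun i => (algHomOfDvd_mk (hg i) r).trans (hr i)⟩

theorem isNilpotent_of_pi_algHomOfDvd_eq_zero (hg : ∀ i, g i ∣ f) (hf : f ≠ 0)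
    (hfac : ∀ p : K[X], p.Monic → Irreducible p → p ∣ f → ∃ i, p ∣ g i)
    {x : AdjoinRoot f}
    (hx : AlgHom.pi (fun i => algHomOfDvd K f (g i) (hg i)) x = 0) : IsNilpotent x := by
  obtain ⟨r, rfl⟩ := mk_surjective x
  have hgr : ∀ i, g i ∣ r := fun i =>
    mk_eq_zero.1 ((algHomOfDvd_mk (hg i) r).symm.trans (congrFun hx i))
  obtain ⟨n, hn⟩ := exists_dvd_pow_of_forall_monic_irreducible_dvd hf fun p hmon hirr hpf =>
    let ⟨i, hpi⟩ := hfac p hmon hirr hpf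
    hpi.trans (hgr i)
  exact ⟨n, by rw [← map_pow, mk_eq_zero]; exact hn⟩

end AdjoinRoot

/-- (Petr) For `f ∈ F_q[x]` of degree `d ≥ 1` with distinct monic irreducible factors of
degrees `d_1, …, d_k`, and `F` the `q`-th power Frobenius acting on `R = F_q[x]/(f)`,
one has `det(1_R - T·F) = ∏_{i=1}^k (1 - T^{d_i})` in `F_q[T]`. -/
theorem petr_congruence_formula
    (Fq : Type) [Field Fq] [Fintype Fq]
    (f : Polynomial Fq) (d : ℕ) (hd : 1 ≤ d) (hdeg : f.natDegree = d)
    (k : ℕ) (fi : Fin k → Polynomial Fq) (di : Fin k → ℕ)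
    (hinj : Function.Injective fi)
    (hmonic : ∀ i, (fi i).Monic) (hirr : ∀ i, Irreducible (fi i))
    (hdi : ∀ i, (fi i).natDegree = di i)
    (hfact : ∀ g : Polynomial Fq, g.Monic → Irreducible g → (g ∣ f ↔ ∃ i, g = fi i))
    (F : AdjoinRoot f →ₗ[Fq] AdjoinRoot f)
    (hF : ∀ y, F y = y ^ Fintype.card Fq)
    (ι : Type) [Fintype ι] [DecidableEq ι] (b : Module.Basis ι Fq (AdjoinRoot f)) :
    Matrix.det
        (1 - (Polynomial.X : Polynomial Fq) • (LinearMap.toMatrix b b F).map Polynomial.C) =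
      ∏ i : Fin k, (1 - (Polynomial.X : Polynomial Fq) ^ di i) := by
  have hf : f ≠ 0 := by
    rintro rfl
    simp at hdeg
    omega
  have : Module.Finite Fq (AdjoinRoot f) := .of_basis b
  have (i : Fin k) : Fact (Irreducible (fi i)) := ⟨hirr i⟩
  have (i : Fin k) : Module.Finite Fq (AdjoinRoot (fi i)) :=
    (AdjoinRoot.powerBasis' (hmonic i)).finite
  have hdvd (i : Fin k) : fi i ∣ f := (hfact _ (hmonic i) (hirr i)).2 ⟨i, rfl⟩
  let Φ := AlgHom.pi fun i => AdjoinRoot.algHomOfDvd Fq f (fi i) (hdvd i)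
  have hΦ : Function.Surjective Φ := AdjoinRoot.pi_algHomOfDvd_surjective hdvd fun i j hij =>
    (hmonic i).isCoprime_of_irreducible_of_ne (hmonic j) (hirr i) (hirr j) (hinj.ne hij)
  have hnil (x) (hx : x ∈ ker Φ.toLinearMap) :
      ∃ m, ((frobeniusAlgHom Fq _).toLinearMap ^ m) x = 0 :=
    exists_frobeniusAlgHom_pow_apply_eq_zero Fq <|
      AdjoinRoot.isNilpotent_of_pi_algHomOfDvd_eq_zero hdvd hf (fun p hmon hirr hpf =>
        ((hfact p hmon hirr).1 hpf).imp fun i (hi : p = fi i) => hi ▸ dvd_rfl) hx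
  have hcharpoly : F.charpoly = X ^ finrank Fq (ker Φ.toLinearMap) * ∏ i, (X ^ di i - 1) := by
    rw [show F = (frobeniusAlgHom Fq _).toLinearMap from LinearMap.ext hF,
      charpoly_eq_X_pow_mul_of_surjective (ψ := (frobeniusAlgHom Fq _).toLinearMap) hΦ
        (LinearMap.ext fun x => map_pow Φ x _) (frobeniusAlgHom_injective Fq _) hnil,
      frobeniusAlgHom_pi, charpoly_pi]
    refine congrArg _ (Finset.prod_congr rfl fun i _ => ?_)
    rw [charpoly_frobeniusAlgHom, (AdjoinRoot.powerBasis' (hmonic i)).finrank,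
      AdjoinRoot.powerBasis'_dim, hdi]
  change (LinearMap.toMatrix b b F).charpolyRev = _
  rw [← Matrix.reverse_charpoly, charpoly_toMatrix, hcharpoly, reverse_X_pow_mul, reverse_prod]
  exact Finset.prod_congr rfl fun i _ => reverse_X_pow_sub_one (di i)
end

section
/- (Butler) Let f ∈ F_q[x] be a polynomial of degree d ≥ 1 and let R = F_q[x]/(f). Let F be the F_q-linear endomorphism of R induced by h ↦ h^q, and let R_1(F) = {h ∈ R : F(h) = h} be the fixed subspace of F. Then dim_{F_q} R_1(F) = k, where k is the number of distinct monic irreducible factors of f over F_q. -/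
/-! By the Chinese remainder theorem `F_q[x]/(f) ≅ ∏ᵢ F_q[x]/(pᵢ ^ eᵢ)`, where the `pᵢ` are
the distinct monic irreducible factors of `f`; the isomorphism commutes with `h ↦ h ^ q`, and
each factor is a local ring. In a local `F_q`-algebra the only solutions of `y ^ q = y` are the
constants, since `y ^ q - y = ∏_{a ∈ F_q} (y - a)` and at most one of these factors is a
non-unit. Hence the fixed space is `F_q ^ k`. -/

open Polynomial FiniteField UniqueFactorizationMonoid

theorem FiniteField.X_pow_card_sub_X_eq_prod (K : Type*) [Field K] [Fintype K] :
    (X ^ Fintype.card K - X : K[X]) = ∏ a : K, (X - C a) := by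
  have hq : 1 < Fintype.card K := Fintype.one_lt_card
  have hmonic : (X ^ Fintype.card K - X : K[X]).Monic :=
    (monic_X_pow _).sub_of_left (by rw [degree_X_pow, degree_X]; exact_mod_cast hq)
  have hroots := FiniteField.roots_X_pow_card_sub_X K
  have hprod := prod_multiset_X_sub_C_of_monic_of_roots_card_eq hmonic
    (by rw [hroots, FiniteField.X_pow_card_sub_X_natDegree_eq K hq]; rfl)
  rw [hroots] at hprod
  exact hprod.symm

section FrobeniusFixed

variable (K : Type*) [Field K] [Fintype K]

theorem FiniteField.pow_card_sub_self_eq_prod {A : Type*} [CommRing A] [Algebra K A] (y : A) :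
    y ^ Fintype.card K - y = ∏ a : K, (y - algebraMap K A a) := by
  simpa using congrArg (aeval y) (FiniteField.X_pow_card_sub_X_eq_prod K)

theorem IsLocalRing.exists_algebraMap_eq_of_pow_card_eq {A : Type*} [CommRing A] [IsLocalRing A]
    [Algebra K A] {y : A} (hy : y ^ Fintype.card K = y) : ∃ a : K, algebraMap K A a = y := by
  classical
  have hzero : ∏ a : K, (y - algebraMap K A a) = 0 := by
    rw [← FiniteField.pow_card_sub_self_eq_prod, hy, sub_self]
  obtain ⟨a, -, ha⟩ := (Ideal.IsPrime.prod_mem_iff (p := maximalIdeal A)).mp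
    (hzero ▸ (maximalIdeal A).zero_mem)
  -- two factors `y - a`, `y - b` both in the maximal ideal would put the unit `a - b` there
  have hrest : IsUnit (∏ b ∈ Finset.univ.erase a, (y - algebraMap K A b)) := by
    refine notMem_maximalIdeal.mp fun hmem => ?_
    obtain ⟨b, hb, hb'⟩ := Ideal.IsPrime.prod_mem_iff.mp hmem
    have hab : algebraMap K A (a - b) ∈ maximalIdeal A := by
      simpa using (maximalIdeal A).sub_mem hb' ha
    exact notMem_maximalIdeal.mpr
      ((sub_ne_zero.mpr (Finset.ne_of_mem_erase hb).symm).isUnit.map _) hab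
  refine ⟨a, (sub_eq_zero.mp ?_).symm⟩
  rwa [← Finset.mul_prod_erase _ _ (Finset.mem_univ a), hrest.mul_left_eq_zero] at hzero

def frobeniusFixedSpace (A : Type*) [CommRing A] [Algebra K A] : Submodule K A :=
  LinearMap.ker ((frobeniusAlgHom K A).toLinearMap - LinearMap.id)

variable {K}

theorem mem_frobeniusFixedSpace {A : Type*} [CommRing A] [Algebra K A] {y : A} :
    y ∈ frobeniusFixedSpace K A ↔ y ^ Fintype.card K = y := by
  simp [frobeniusFixedSpace, sub_eq_zero]

theorem AlgEquiv.map_frobeniusFixedSpace {A B : Type*} [CommRing A] [Algebra K A] [CommRing B]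
    [Algebra K B] (e : A ≃ₐ[K] B) :
    (frobeniusFixedSpace K A).map (e.toLinearEquiv : A →ₗ[K] B) = frobeniusFixedSpace K B := by
  ext y
  rw [Submodule.map_equiv_eq_comap_symm, Submodule.mem_comap, mem_frobeniusFixedSpace,
    mem_frobeniusFixedSpace]
  change (e.symm y) ^ _ = e.symm y ↔ _
  rw [← map_pow, e.symm.injective.eq_iff]

theorem AlgEquiv.finrank_frobeniusFixedSpace_eq {A B : Type*} [CommRing A] [Algebra K A]
    [CommRing B] [Algebra K B] (e : A ≃ₐ[K] B) :
    Module.finrank K (frobeniusFixedSpace K A) = Module.finrank K (frobeniusFixedSpace K B) := by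
  rw [← e.map_frobeniusFixedSpace, LinearEquiv.finrank_map_eq]

theorem frobeniusFixedSpace_pi_eq_range {ι : Type*} (A : ι → Type*) [∀ i, CommRing (A i)]
    [∀ i, IsLocalRing (A i)] [∀ i, Algebra K (A i)] :
    frobeniusFixedSpace K (∀ i, A i) =
      LinearMap.range (LinearMap.piMap fun i => Algebra.linearMap K (A i)) := by
  ext y
  simp only [mem_frobeniusFixedSpace, LinearMap.mem_range, LinearMap.coe_piMap, funext_iff,
    Pi.pow_apply, Pi.map_apply, Algebra.linearMap_apply]
  constructor
  · intro hy
    choose c hc using fun i => IsLocalRing.exists_algebraMap_eq_of_pow_card_eq K (hy i)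
    exact ⟨c, hc⟩
  · rintro ⟨c, hc⟩ i
    rw [← hc i, ← map_pow, FiniteField.pow_card]

theorem finrank_frobeniusFixedSpace_pi {ι : Type*} [Fintype ι] (A : ι → Type*)
    [∀ i, CommRing (A i)] [∀ i, IsLocalRing (A i)] [∀ i, Algebra K (A i)] :
    Module.finrank K (frobeniusFixedSpace K (∀ i, A i)) = Fintype.card ι := by
  rw [frobeniusFixedSpace_pi_eq_range, LinearMap.finrank_range_of_inj,
    Module.finrank_fintype_fun_eq_card]
  exact Function.Injective.piMap fun i => (algebraMap K (A i)).injective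

theorem Ideal.isLocalRing_quotient_pow {R : Type*} [CommRing R] (P : Ideal R) [P.IsMaximal]
    {n : ℕ} (hn : n ≠ 0) : IsLocalRing (R ⧸ P ^ n) := by
  have hsurj := Ideal.Quotient.mk_surjective (I := P ^ n)
  have hker : RingHom.ker (Ideal.Quotient.mk (P ^ n)) ≤ P := by
    rw [Ideal.mk_ker]; exact Ideal.pow_le_self hn
  refine IsLocalRing.of_unique_max_ideal
    ⟨P.map (Ideal.Quotient.mk _), .map_of_surjective_of_ker_le hsurj hker, fun M hM => ?_⟩
  have hcomap : M.comap (Ideal.Quotient.mk _) = P := by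
    have := Ideal.comap_isMaximal_of_surjective _ hsurj (K := M)
    refine (Ideal.IsMaximal.eq_of_le ‹P.IsMaximal› this.ne_top ?_).symm
    exact Ideal.IsPrime.le_of_pow_le (n := n) fun x hx => by
      simp [Ideal.Quotient.eq_zero_iff_mem.mpr hx]
  calc M = (M.comap (Ideal.Quotient.mk _)).map (Ideal.Quotient.mk _) :=
        (Ideal.map_comap_of_surjective _ hsurj M).symm
    _ = P.map (Ideal.Quotient.mk _) := by rw [hcomap]

theorem IsDedekindDomain.finrank_frobeniusFixedSpace_quotient {R : Type*} [CommRing R]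
    [IsDedekindDomain R] [Algebra K R] {I : Ideal R} (hI : I ≠ ⊥) :
    Module.finrank K (frobeniusFixedSpace K (R ⧸ I)) = Nat.card (factors I).toFinset := by
  have hlocal : ∀ P : (factors I).toFinset,
      IsLocalRing (R ⧸ (P : Ideal R) ^ (factors I).count (P : Ideal R)) := by
    rintro ⟨P, hP⟩
    rw [Multiset.mem_toFinset] at hP
    have hprime := prime_of_factor P hP
    have : P.IsMaximal := (Ideal.isPrime_of_prime hprime).isMaximal hprime.ne_zero
    exact Ideal.isLocalRing_quotient_pow P (Multiset.count_pos.mpr hP).ne'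
  let e : (R ⧸ I) ≃ₐ[K] _ :=
    AlgEquiv.ofRingEquiv (f := quotientEquivPiFactors hI) fun _ => rfl
  rw [e.finrank_frobeniusFixedSpace_eq, finrank_frobeniusFixedSpace_pi, Nat.card_eq_fintype_card]

end FrobeniusFixed

theorem Polynomial.card_monic_irreducible_dvd_eq_card_factors_span {K : Type*} [Field K]
    {f : K[X]} (hf : f ≠ 0) :
    Nat.card {g : K[X] // g.Monic ∧ Irreducible g ∧ g ∣ f} =
      Nat.card (factors (Ideal.span {f})).toFinset := by
  classical
  refine Nat.card_congr <| (Equiv.subtypeEquivRight fun g => ?_).trans <|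
    (Ideal.normalizedFactorsEquivSpanNormalizedFactors hf).trans <|
      Equiv.subtypeEquivRight fun I => ?_
  · rw [Set.mem_ofPred_eq, Polynomial.mem_normalizedFactors_iff hf, and_left_comm]
  · rw [Set.mem_ofPred_eq, Multiset.mem_toFinset, factors_eq_normalizedFactors]

/-- (Butler) For `f ∈ F_q[x]` of degree `d ≥ 1`, the fixed space of the `q`-th power
Frobenius `F` on `R = F_q[x]/(f)` has `F_q`-dimension equal to the number of distinct
monic irreducible factors of `f` over `F_q`. -/
theorem butler_fixed_space_dimension
    (Fq : Type) [Field Fq] [Fintype Fq]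
    (f : Polynomial Fq) (d : ℕ) (hd : 1 ≤ d) (hdeg : f.natDegree = d)
    (F : AdjoinRoot f →ₗ[Fq] AdjoinRoot f)
    (hF : ∀ y, F y = y ^ Fintype.card Fq) :
    Module.finrank Fq (LinearMap.ker (F - LinearMap.id)) =
      Nat.card {g : Polynomial Fq // g.Monic ∧ Irreducible g ∧ g ∣ f} := by
  have hf : f ≠ 0 := by
    rintro rfl
    rw [natDegree_zero] at hdeg
    omega
  obtain rfl : F = (frobeniusAlgHom Fq (AdjoinRoot f)).toLinearMap := LinearMap.ext hF
  rw [card_monic_irreducible_dvd_eq_card_factors_span hf, ←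
    IsDedekindDomain.finrank_frobeniusFixedSpace_quotient (K := Fq)
      (mt Ideal.span_singleton_eq_bot.mp hf)]
  rfl
end

section
/- For every positive integer d, the d × d matrix A over ℚ whose (i,j) entry is gcd(i, j) for 1 ≤ i, j ≤ d is invertible. -/
/-!
Smith's determinant. Since `φ` sums to `g` over the divisors of `g`,
`gcd(a, b) = ∑_{k ∣ a, k ∣ b} φ(k)`, i.e. the gcd matrix factors as `Zᵀ · diag(φ) · Z` with `Z` the
divisibility matrix `Z k j = [k ∣ j]`. The matrix `Z` is unitriangular, so the determinant of the gcd
matrix is `∏ φ(k) ≠ 0`.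
-/

open Finset Matrix

namespace Nat

theorem sum_totient_filter_range_of_lt {g n : ℕ} (hg : g ≠ 0) (hgn : g < n) :
    ∑ m ∈ range n with m ∣ g, φ m = g := by
  have : {m ∈ range n | m ∣ g} = g.divisors := by
    ext m
    simp only [mem_filter, mem_range, mem_divisors, ne_eq, hg, not_false_eq_true, and_true]
    exact ⟨And.right, fun h => ⟨(le_of_dvd (pos_of_ne_zero hg) h).trans_lt hgn, h⟩⟩
  rw [this, sum_totient]

theorem sum_totient_filter_fin_of_le {g n : ℕ} (hg : g ≠ 0) (hgn : g ≤ n) :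
    ∑ k : Fin n with k.val + 1 ∣ g, φ (k.val + 1) = g := by
  have h0 : ¬ 0 ∣ g := by simpa using hg
  calc _ = ∑ k ∈ range n, if k + 1 ∣ g then φ (k + 1) else 0 := by
        rw [sum_filter, Fin.sum_univ_eq_sum_range (fun k => if k + 1 ∣ g then φ (k + 1) else 0)]
    _ = ∑ m ∈ range (n + 1) with m ∣ g, φ m := by
        rw [sum_filter, sum_range_succ', if_neg h0, add_zero]
    _ = g := sum_totient_filter_range_of_lt hg (lt_succ_of_le hgn)

end Nat

variable (R : Type*)

def divisibilityMatrix [Zero R] [One R] (n : ℕ) : Matrix (Fin n) (Fin n) R :=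
  of fun i j => if i.val + 1 ∣ j.val + 1 then 1 else 0

theorem divisibilityMatrix_isUpperTriangular [Zero R] [One R] (n : ℕ) :
    (divisibilityMatrix R n).IsUpperTriangular := by
  intro i j (hji : j < i)
  have : ¬ i.val + 1 ∣ j.val + 1 := Nat.not_dvd_of_pos_of_lt (by omega) (by omega)
  simp [divisibilityMatrix, this]

theorem det_divisibilityMatrix [CommRing R] (n : ℕ) : (divisibilityMatrix R n).det = 1 := by
  rw [det_of_isUpperTriangular (divisibilityMatrix_isUpperTriangular R n)]
  simp [divisibilityMatrix]

theorem gcdMatrix_eq_transpose_mul_diagonal_mul [CommSemiring R] (n : ℕ) :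
    (of fun i j : Fin n => ((Nat.gcd (i.val + 1) (j.val + 1) : ℕ) : R)) =
      (divisibilityMatrix R n)ᵀ * diagonal (fun k => (Nat.totient (k.val + 1) : R)) *
        divisibilityMatrix R n := by
  ext i j
  have hg : Nat.gcd (i.val + 1) (j.val + 1) ≠ 0 := Nat.gcd_ne_zero_left i.val.succ_ne_zero
  have hgn : Nat.gcd (i.val + 1) (j.val + 1) ≤ n := (Nat.gcd_le_left _ i.val.succ_pos).trans i.2
  rw [of_apply, ← Nat.sum_totient_filter_fin_of_le hg hgn, mul_apply, Nat.cast_sum, sum_filter]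
  refine sum_congr rfl fun k _ => ?_
  by_cases hi : k.val + 1 ∣ i.val + 1 <;> by_cases hj : k.val + 1 ∣ j.val + 1 <;>
    simp [divisibilityMatrix, hi, hj, Nat.dvd_gcd_iff]

theorem det_gcdMatrix [CommRing R] (n : ℕ) :
    (of fun i j : Fin n => ((Nat.gcd (i.val + 1) (j.val + 1) : ℕ) : R)).det =
      ∏ k : Fin n, (Nat.totient (k.val + 1) : R) := by
  rw [gcdMatrix_eq_transpose_mul_diagonal_mul, det_mul, det_mul, det_transpose,
    det_divisibilityMatrix, det_diagonal, one_mul, mul_one]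

theorem gcd_matrix_invertible_general (d : ℕ) :
    IsUnit (Matrix.of fun i j : Fin d => ((Nat.gcd (i.1 + 1) (j.1 + 1) : ℕ) : ℚ)) := by
  rw [isUnit_iff_isUnit_det, det_gcdMatrix, isUnit_iff_ne_zero, prod_ne_zero_iff]
  exact fun k _ => Nat.cast_ne_zero.mpr (Nat.totient_pos.mpr k.val.succ_pos).ne'

/-- The `d × d` matrix over `ℚ` whose `(i,j)` entry is `gcd(i,j)` (for `1 ≤ i, j ≤ d`)
is invertible. -/
theorem gcd_matrix_invertible (d : ℕ) (hd : 0 < d) :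
    IsUnit (Matrix.of fun i j : Fin d => ((Nat.gcd (i.1 + 1) (j.1 + 1) : ℕ) : ℚ)) :=
  gcd_matrix_invertible_general d
end

section
/- (Berlekamp splitting) Let f ∈ F_q[x] be a monic polynomial of degree d ≥ 1 and let h ∈ F_q[x] satisfy f | h^q − h. Then f = ∏_{c ∈ F_q} gcd(f, h − c), where gcd denotes the monic greatest common divisor in F_q[x] and the product runs over all elements c of F_q. -/
/-! Since every element of `F_q` is a root of `X^q - X`, which has degree `q`, we have
`X^q - X = ∏_c (X - c)`; substituting `h` gives `h^q - h = ∏_c (h - c)`, a product of pairwise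
coprime factors (any two differ by a nonzero constant). As `f` is monic and divides it,
`f = gcd(f, h^q - h)`, and `gcd` with `f` is multiplicative over coprime factors. -/

open Function Polynomial

theorem gcd_mul_of_isCoprime {α : Type*} [CommSemiring α] [IsDomain α]
    [StrongNormalizedGCDMonoid α] (a : α) {b c : α} (hbc : IsCoprime b c) :
    gcd a (b * c) = gcd a b * gcd a c := by
  apply dvd_antisymm_of_normalize_eq (normalize_gcd _ _)
  · rw [normalize_mul, normalize_gcd, normalize_gcd]
  · exact gcd_mul_dvd_mul_gcd a b c
  · have hcop : IsCoprime (gcd a b) (gcd a c) :=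
      (hbc.of_isCoprime_of_dvd_left (gcd_dvd_right a b)).of_isCoprime_of_dvd_right
        (gcd_dvd_right a c)
    exact dvd_gcd (hcop.mul_dvd (gcd_dvd_left a b) (gcd_dvd_left a c))
      (mul_dvd_mul (gcd_dvd_right a b) (gcd_dvd_right a c))

theorem gcd_prod_of_pairwise_isCoprime {α ι : Type*} [CommSemiring α] [IsDomain α]
    [StrongNormalizedGCDMonoid α] (a : α) (s : Finset ι) {b : ι → α}
    (hb : (s : Set ι).Pairwise (IsCoprime on b)) :
    gcd a (∏ i ∈ s, b i) = ∏ i ∈ s, gcd a (b i) := by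
  induction s using Finset.cons_induction with
  | empty => simp
  | cons i s his ih =>
    have hcop : IsCoprime (b i) (∏ j ∈ s, b j) := IsCoprime.prod_right fun j hj =>
      hb (s.mem_cons_self i) (Finset.mem_cons_of_mem hj) fun hij => his (hij ▸ hj)
    rw [Finset.prod_cons, Finset.prod_cons, gcd_mul_of_isCoprime a hcop,
      ih (hb.mono (Finset.coe_subset.2 (Finset.subset_cons his)))]

theorem pairwise_isCoprime_sub_algebraMap {K A : Type*} [Field K] [CommRing A] [Algebra K A]
    (a : A) : Pairwise (IsCoprime on fun c : K => a - algebraMap K A c) := fun c c' hcc' => by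
  simpa using (pairwise_coprime_X_sub_C injective_id hcc').map (aeval a).toRingHom

namespace FiniteField

variable {K : Type*} [Field K] [Fintype K]

theorem prod_X_sub_C_eq_X_pow_card_sub_X :
    ∏ c : K, (X - C c) = (X ^ Fintype.card K - X : K[X]) := by
  have hmonic : (X ^ Fintype.card K - X : K[X]).Monic :=
    monic_X_pow_sub (degree_X.trans_lt (by exact_mod_cast Fintype.one_lt_card))
  have hcard : Multiset.card (X ^ Fintype.card K - X : K[X]).roots =
      (X ^ Fintype.card K - X : K[X]).natDegree := by
    rw [roots_X_pow_card_sub_X, X_pow_card_sub_X_natDegree_eq K Fintype.one_lt_card,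
      ← Finset.card_def, Finset.card_univ]
  rw [Finset.prod_eq_multiset_prod, ← roots_X_pow_card_sub_X,
    prod_multiset_X_sub_C_of_monic_of_roots_card_eq hmonic hcard]

theorem prod_sub_algebraMap_eq_pow_card_sub {A : Type*} [CommRing A] [Algebra K A] (a : A) :
    ∏ c : K, (a - algebraMap K A c) = a ^ Fintype.card K - a := by
  simpa using congrArg (aeval a) (prod_X_sub_C_eq_X_pow_card_sub_X (K := K))

end FiniteField

theorem berlekamp_splitting_general
    (Fq : Type) [Field Fq] [Fintype Fq] [DecidableEq Fq]
    (f : Polynomial Fq) (hmonic : f.Monic)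
    (h : Polynomial Fq) (hdvd : f ∣ h ^ Fintype.card Fq - h) :
    f = ∏ c : Fq, gcd f (h - Polynomial.C c) := by
  have hsplit := FiniteField.prod_sub_algebraMap_eq_pow_card_sub (K := Fq) h
  have hcop := pairwise_isCoprime_sub_algebraMap (K := Fq) h
  rw [algebraMap_eq] at hsplit hcop
  calc f = gcd f (h ^ Fintype.card Fq - h) :=
        ((gcd_eq_left_iff f _ hmonic.normalize_eq_self).2 hdvd).symm
    _ = ∏ c : Fq, gcd f (h - C c) := by
      rw [← hsplit, gcd_prod_of_pairwise_isCoprime f _ (hcop.set_pairwise _)]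

/-- (Berlekamp splitting) If `f ∈ F_q[x]` is monic of degree `d ≥ 1` and `h ∈ F_q[x]`
satisfies `f ∣ h^q - h`, then `f = ∏_{c ∈ F_q} gcd(f, h - c)`, the gcd being the monic
(normalized) greatest common divisor. -/
theorem berlekamp_splitting
    (Fq : Type) [Field Fq] [Fintype Fq] [DecidableEq Fq]
    (f : Polynomial Fq) (hmonic : f.Monic) (hd : 1 ≤ f.natDegree)
    (h : Polynomial Fq) (hdvd : f ∣ h ^ Fintype.card Fq - h) :
    f = ∏ c : Fq, gcd f (h - Polynomial.C c) :=
  berlekamp_splitting_general Fq f hmonic h hdvd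
end

section
/- Let f ∈ F_q[x] be a polynomial of degree d ≥ 1. Let ψ_q be the F_q-linear map on F_q[x] determined by ψ_q(x^u) = x^{u/q} if q | u and 0 otherwise, and let H^{(q-1)} be the (q−1)-th Hasse derivative on F_q[x]. Then the ideal (f) of F_q[x] is stable under the operator D defined by D(h) = ψ_q(H^{(q-1)}(f^{q-1}·h)): that is, for every h ∈ F_q[x], if f divides h then f divides ψ_q(H^{(q-1)}(f^{q-1}·h)). -/
/-!
Write `h = f g`. Since Frobenius fixes `F_q`, `f^{q-1} h = f^q g = f(x^q) g`. The binomial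
coefficients `C(q s, i)` vanish in characteristic `p` when `q ∤ i`, so Hasse derivatives of
order `0 < i < q` kill polynomials in `x^q`, and the Leibniz rule gives
`H^{(q-1)}(f(x^q) g) = f(x^q) H^{(q-1)} g`. Finally `ψ_q(f(x^q) a) = f ψ_q(a)`.
-/

open Polynomial

section ExpChar

variable {R : Type*} [CommSemiring R] (p : ℕ) [ExpChar R p] (n : ℕ)

theorem expand_X_add_one_pow (s : ℕ) :
    expand R (p ^ n) ((X + 1) ^ s) = (X + 1 : R[X]) ^ (p ^ n * s) := by
  rw [pow_mul, add_pow_expChar_pow, one_pow, map_pow, map_add, expand_X, map_one]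

theorem cast_choose_pow_mul_eq_zero {s i : ℕ} (hi : ¬ p ^ n ∣ i) :
    ((p ^ n * s).choose i : R) = 0 := by
  rw [← coeff_X_add_one_pow, ← expand_X_add_one_pow,
    coeff_expand (pow_pos (expChar_pos R p) n), if_neg hi]

theorem hasseDeriv_expand_eq_zero (φ : R[X]) {i : ℕ} (hi : ¬ p ^ n ∣ i) :
    hasseDeriv i (expand R (p ^ n) φ) = 0 := by
  ext m
  rw [hasseDeriv_coeff, coeff_expand (pow_pos (expChar_pos R p) n), coeff_zero]
  split_ifs with hdvd
  · obtain ⟨s, hs⟩ := hdvd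
    rw [hs, cast_choose_pow_mul_eq_zero p n hi, zero_mul]
  · rw [mul_zero]

theorem hasseDeriv_expand_mul (φ g : R[X]) {k : ℕ} (hk : k < p ^ n) :
    hasseDeriv k (expand R (p ^ n) φ * g) = expand R (p ^ n) φ * hasseDeriv k g := by
  rw [hasseDeriv_mul, Finset.Nat.sum_antidiagonal_eq_sum_range_succ_mk,
    Finset.sum_eq_single 0]
  · rw [hasseDeriv_zero', Nat.sub_zero]
  · intro i hi hi0
    have : ¬ p ^ n ∣ i := fun hdvd =>
      (Nat.le_of_dvd (Nat.pos_of_ne_zero hi0) hdvd).not_gt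
        ((Finset.mem_range_succ_iff.mp hi).trans_lt hk)
    rw [hasseDeriv_expand_eq_zero p n φ this, zero_mul]
  · simp

end ExpChar

theorem ideal_stable_under_D_general
    (Fq : Type) [Field Fq] [Fintype Fq]
    (ψ : Polynomial Fq →ₗ[Fq] Polynomial Fq)
    (hψ : ∀ (g : Polynomial Fq) (n : ℕ),
      (ψ g).coeff n = g.coeff (Fintype.card Fq * n))
    (f : Polynomial Fq)
    (h : Polynomial Fq) (hfh : f ∣ h) :
    f ∣ ψ (Polynomial.hasseDeriv (Fintype.card Fq - 1)
      (f ^ (Fintype.card Fq - 1) * h)) := by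
  obtain ⟨p, _, n, hp, hq⟩ := FiniteField.card' Fq
  have := ExpChar.prime (R := Fq) hp
  have hq0 : p ^ (n : ℕ) ≠ 0 := hq ▸ Fintype.card_ne_zero
  have hψ_eq : ∀ g, ψ g = contract (p ^ (n : ℕ)) g := fun g =>
    ext fun m => by rw [hψ, coeff_contract hq0, hq, mul_comm]
  obtain ⟨g, rfl⟩ := hfh
  have hfrob : f ^ (Fintype.card Fq - 1) * (f * g) = expand Fq (Fintype.card Fq) f * g := by
    rw [FiniteField.expand_card, ← mul_assoc, ← pow_succ, Nat.sub_add_cancel Fintype.card_pos]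
  rw [hfrob, hq, hasseDeriv_expand_mul p n f g (Nat.sub_lt (Nat.pos_of_ne_zero hq0) one_pos),
    hψ_eq, mul_comm, contract_mul_expand hq0]
  exact dvd_mul_left f _

/-- For `f ∈ F_q[x]` of degree `d ≥ 1`, the ideal `(f)` is stable under the operator
`D(h) = ψ_q(H^{(q-1)}(f^{q-1}·h))`, where `ψ_q` satisfies `(ψ_q g).coeff n = g.coeff (q·n)`
and `H^{(q-1)}` is the `(q-1)`-th Hasse derivative. -/
theorem ideal_stable_under_D
    (Fq : Type) [Field Fq] [Fintype Fq]
    (ψ : Polynomial Fq →ₗ[Fq] Polynomial Fq)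
    (hψ : ∀ (g : Polynomial Fq) (n : ℕ),
      (ψ g).coeff n = g.coeff (Fintype.card Fq * n))
    (f : Polynomial Fq) (hd : 1 ≤ f.natDegree)
    (h : Polynomial Fq) (hfh : f ∣ h) :
    f ∣ ψ (Polynomial.hasseDeriv (Fintype.card Fq - 1)
      (f ^ (Fintype.card Fq - 1) * h)) :=
  ideal_stable_under_D_general Fq ψ hψ f h hfh
end

section
/- Let f ∈ F_q[x] be a polynomial of degree d ≥ 1 with factorization f = ∏_{i=1}^{k} f_i^{a_i} into powers of distinct monic irreducible polynomials f_i, and let R = F_q[x]/(f). Let D be the F_q-linear endomorphism of R induced by h ↦ ψ_q(H^{(q-1)}(f^{q-1}·h)). Then the images in R of the k polynomials f_i′(x)·(f(x)/f_i(x)) for 1 ≤ i ≤ k (where f_i′ is the derivative of f_i) form an F_q-basis of the fixed space R_1(D) = {h ∈ R : D(h) = h}. -/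
/-
With `q = |F_q|`, the operator `N u = ψ_q (H^{(q-1)} u)` just reads off the coefficients of
`u` of index `≡ -1 (mod q)`, since `C(qn + q - 1, q - 1) ≡ 1`. Hence `N (g^q u) = g N u` and
`N (g^(q-1) g') = g'`. The first rule splits the fixed-point equation `h = N (f^(q-1) h)`,
`deg h < deg f`, along a coprime factorisation `f = u v` (write `h = A v + B u`); for
`f = g^(a+1)` with `a ≥ 1` it forces `g ∣ h` and lowers `a`; and for `f = g` irreducible,
writing `h ≡ z^q g' (mod g)` (Frobenius is onto `F_q[x]/(g)`) it gives `h ≡ z g'`, so `z^q = z`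
and `z` is a constant. The second rule shows that the `f_i' f/f_i` are fixed, and they are
independent modulo `f` because `f_i^(a_i)` divides all of them but the `i`-th.
-/

open Polynomial

theorem Finset.dvd_prod_pow_of_mem {ι M : Type*} [CommMonoid M] {s : Finset ι} {f : ι → M}
    {a : ι → ℕ} {i : ι} (hi : i ∈ s) (ha : 1 ≤ a i) : f i ∣ ∏ j ∈ s, f j ^ a j :=
  (dvd_pow_self _ (Nat.one_le_iff_ne_zero.1 ha)).trans (Finset.dvd_prod_of_mem _ hi)

namespace Polynomial

theorem coeff_pow_pred_mul_derivative_of_charZero {A : Type*} [CommRing A] [IsDomain A]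
    [CharZero A] (G : A[X]) {Q : ℕ} (hQ : 0 < Q) (n : ℕ) :
    (G ^ (Q - 1) * derivative G).coeff (Q * n + (Q - 1)) =
      (n + 1) * (G ^ Q).coeff (Q * (n + 1)) := by
  have hidx : Q * n + (Q - 1) + 1 = Q * (n + 1) := by rw [mul_add_one]; omega
  have hcast : ((Q * n + (Q - 1) : ℕ) : A) + 1 = ((Q * (n + 1) : ℕ) : A) := by
    exact_mod_cast hidx
  have key := congrArg (coeff · (Q * n + (Q - 1))) (derivative_pow G Q)
  simp only [coeff_derivative, hidx, hcast, mul_assoc, coeff_C_mul] at key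
  refine mul_left_cancel₀ (Nat.cast_ne_zero.mpr hQ.ne' : (Q : A) ≠ 0) ?_
  rw [← key]
  push_cast
  ring

-- Compare coefficients in `(g^Q)' = Q g^(Q-1) g'` over a characteristic-zero domain mapping onto
-- `S`, where `Q` can be cancelled.
theorem coeff_pow_pred_mul_derivative {S : Type*} [CommRing S] (g : S[X]) {Q : ℕ} (hQ : 0 < Q)
    (n : ℕ) :
    (g ^ (Q - 1) * derivative g).coeff (Q * n + (Q - 1)) =
      (n + 1) * (g ^ Q).coeff (Q * (n + 1)) := by
  let φ : MvPolynomial S ℤ →+* S := (MvPolynomial.aeval id).toRingHom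
  obtain ⟨G, rfl⟩ := map_surjective φ (fun s => ⟨MvPolynomial.X s, by simp [φ]⟩) g
  rw [derivative_map, ← Polynomial.map_pow, ← Polynomial.map_mul, ← Polynomial.map_pow,
    coeff_map, coeff_map, coeff_pow_pred_mul_derivative_of_charZero G hQ n]
  simp

theorem natCast_choose_mul_add_pred_eq_one {R : Type*} [CommRing R] (p : ℕ) [ExpChar R p]
    (e m : ℕ) : (((p ^ e * m + (p ^ e - 1)).choose (p ^ e - 1) : ℕ) : R) = 1 := by
  -- `(X + 1)^(qm + q - 1) = (X^q + 1)^m (X + 1)^(q - 1) ≡ (X + 1)^(q - 1) (mod X^q)`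
  obtain ⟨r, hr⟩ := sub_dvd_pow_sub_pow (X ^ p ^ e + 1 : R[X]) 1 m
  rw [one_pow, add_sub_cancel_right, sub_eq_iff_eq_add'] at hr
  have hfac : (X + 1 : R[X]) ^ (p ^ e * m + (p ^ e - 1)) =
      (X + 1) ^ (p ^ e - 1) + X ^ p ^ e * (r * (X + 1) ^ (p ^ e - 1)) := by
    rw [pow_add, pow_mul, add_pow_expChar_pow, one_pow, hr]
    ring
  have hlt : ¬ p ^ e ≤ p ^ e - 1 := by have := expChar_pow_pos R p e; omega
  simpa [coeff_X_add_one_pow, coeff_X_pow_mul', hlt] using congrArg (coeff · (p ^ e - 1)) hfac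

theorem isCoprime_of_monic_of_irreducible_of_ne {K : Type*} [Field K] {p r : K[X]}
    (hp : p.Monic) (hr : r.Monic) (hpi : Irreducible p) (hri : Irreducible r) (hne : p ≠ r) :
    IsCoprime p r :=
  hpi.coprime_iff_not_dvd.2 fun hdvd =>
    hne (eq_of_monic_of_associated hp hr (hpi.associated_of_dvd hri hdvd))

theorem exists_eq_mul_add_mul_of_isCoprime {K : Type*} [Field K] {u v h : K[X]} (hu : u.Monic)
    (huv : IsCoprime u v) (hh : degree h < degree (u * v)) :
    ∃ A B, degree A < degree u ∧ degree B < degree v ∧ h = A * v + B * u := by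
  obtain ⟨s, t, hst⟩ := huv
  have hv : degree v ≠ ⊥ := by rw [Ne, degree_eq_bot]; rintro rfl; simp at hh
  have hu' : degree u ≠ ⊥ := by rw [Ne, degree_eq_bot]; exact hu.ne_zero
  set A := h * t %ₘ u
  set B := h * s + h * t /ₘ u * v
  have hAB : h = A * v + B * u := by
    linear_combination (-v) * modByMonic_add_div (h * t) u - h * hst
  have hA : degree A < degree u := degree_modByMonic_lt _ hu
  refine ⟨A, B, hA, ?_, hAB⟩
  have hBu : degree (B * u) < degree u + degree v := by
    rw [eq_sub_of_add_eq' hAB.symm, ← degree_mul]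
    refine (degree_sub_le _ _).trans_lt (max_lt hh ?_)
    rw [degree_mul, degree_mul]
    exact WithBot.add_lt_add_right hv hA
  rwa [degree_mul, add_comm, WithBot.add_lt_add_iff_left hu'] at hBu

theorem eq_and_eq_of_mul_add_mul_eq {K : Type*} [Field K] {u v A A' B B' : K[X]}
    (huv : IsCoprime u v) (hA : degree A < degree u) (hA' : degree A' < degree u)
    (h : A * v + B * u = A' * v + B' * u) : A = A' ∧ B = B' := by
  have hu : u ≠ 0 := by rintro rfl; simp at hA
  have hdvd : u ∣ (A - A') * v := ⟨B' - B, by linear_combination h⟩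
  have hAA' : A = A' := sub_eq_zero.1 <| eq_zero_of_dvd_of_degree_lt
    (huv.dvd_of_dvd_mul_right hdvd) ((degree_sub_le _ _).trans_lt (max_lt hA hA'))
  subst hAA'
  exact ⟨rfl, mul_right_cancel₀ hu (add_left_cancel h)⟩

theorem mul_divByMonic_of_dvd {R : Type*} [CommRing R] {p q g : R[X]} (hg : g.Monic)
    (hdvd : g ∣ q) : (p * q) /ₘ g = p * (q /ₘ g) := by
  obtain ⟨w, rfl⟩ := hdvd
  rw [mul_left_comm, mul_divByMonic_cancel_left _ hg, mul_divByMonic_cancel_left _ hg]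

theorem dvd_divByMonic_of_isCoprime {R : Type*} [CommRing R] {f g k : R[X]} (hg : g.Monic)
    (hgf : g ∣ f) (hkf : k ∣ f) (hkg : IsCoprime k g) : k ∣ f /ₘ g := by
  obtain ⟨w, rfl⟩ := hgf
  rw [mul_divByMonic_cancel_left _ hg]
  exact hkg.dvd_of_dvd_mul_left hkf

theorem not_dvd_derivative_of_irreducible {K : Type*} [Field K] [PerfectField K] {g : K[X]}
    (hirr : Irreducible g) : ¬ g ∣ derivative g := by
  rw [dvd_derivative_iff]
  exact (separable_iff_derivative_ne_zero hirr).1 (PerfectField.separable_of_irreducible hirr)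

theorem not_pow_succ_dvd_derivative_mul_divByMonic {K : Type*} [Field K] [PerfectField K]
    {g M : K[X]} (hg : g.Monic) (hirr : Irreducible g) (hM : ¬ g ∣ M) (b : ℕ) :
    ¬ g ^ (b + 1) ∣ derivative g * (g ^ (b + 1) * M /ₘ g) := by
  rw [pow_succ', mul_assoc, mul_divByMonic_cancel_left _ hg, mul_left_comm, mul_comm g,
    mul_dvd_mul_iff_left (pow_ne_zero _ hirr.ne_zero)]
  intro h
  rcases hirr.prime.dvd_or_dvd h with h | h
  · exact not_dvd_derivative_of_irreducible hirr h
  · exact hM h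

theorem pow_dvd_derivative_mul_prod_divByMonic_of_ne {K ι : Type*} [Field K] [Fintype ι]
    {fi : ι → K[X]} {a : ι → ℕ} (hinj : Function.Injective fi)
    (hmonic : ∀ i, (fi i).Monic) (hirr : ∀ i, Irreducible (fi i)) (ha : ∀ i, 1 ≤ a i)
    {i j : ι} (hij : i ≠ j) :
    fi j ^ a j ∣ derivative (fi i) * ((∏ l, fi l ^ a l) /ₘ fi i) := by
  classical
  refine dvd_mul_of_dvd_right (dvd_divByMonic_of_isCoprime (hmonic i)
    (Finset.dvd_prod_pow_of_mem (Finset.mem_univ i) (ha i))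
    (Finset.dvd_prod_of_mem (fun l => fi l ^ a l) (Finset.mem_univ j)) ?_) _
  exact (isCoprime_of_monic_of_irreducible_of_ne (hmonic j) (hmonic i) (hirr j) (hirr i)
    (hinj.ne hij.symm)).pow_left

theorem not_pow_dvd_derivative_mul_prod_divByMonic {K ι : Type*} [Field K] [PerfectField K]
    [Fintype ι] {fi : ι → K[X]} {a : ι → ℕ} (hinj : Function.Injective fi)
    (hmonic : ∀ i, (fi i).Monic) (hirr : ∀ i, Irreducible (fi i)) (ha : ∀ i, 1 ≤ a i)
    (j : ι) : ¬ fi j ^ a j ∣ derivative (fi j) * ((∏ l, fi l ^ a l) /ₘ fi j) := by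
  classical
  obtain ⟨b, hb⟩ := Nat.exists_eq_add_of_le' (ha j)
  rw [← Finset.mul_prod_erase _ (fun l => fi l ^ a l) (Finset.mem_univ j), hb]
  refine not_pow_succ_dvd_derivative_mul_divByMonic (hmonic j) (hirr j) (fun hdvd => ?_) b
  obtain ⟨i, hi, hdvd⟩ := (hirr j).prime.exists_mem_finset_dvd hdvd
  have hcop := isCoprime_of_monic_of_irreducible_of_ne (hmonic j) (hmonic i) (hirr j) (hirr i)
    (hinj.ne (Finset.ne_of_mem_erase hi).symm)
  exact (hirr j).not_isUnit (hcop.isUnit_of_dvd' dvd_rfl ((hirr j).prime.dvd_of_dvd_pow hdvd))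

theorem linearIndependent_mk_derivative_mul_divByMonic {K ι : Type*} [Field K] [PerfectField K]
    [Fintype ι] {fi : ι → K[X]} {a : ι → ℕ} (hinj : Function.Injective fi)
    (hmonic : ∀ i, (fi i).Monic) (hirr : ∀ i, Irreducible (fi i)) (ha : ∀ i, 1 ≤ a i) :
    LinearIndependent K fun i =>
      AdjoinRoot.mk (∏ j, fi j ^ a j) (derivative (fi i) * ((∏ j, fi j ^ a j) /ₘ fi i)) := by
  classical
  set f := ∏ l, fi l ^ a l
  rw [Fintype.linearIndependent_iff]
  intro c hc j
  by_contra hcj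
  have hsum : fi j ^ a j ∣ ∑ i, c i • (derivative (fi i) * (f /ₘ fi i)) := by
    refine (show fi j ^ a j ∣ f from Finset.dvd_prod_of_mem _ (Finset.mem_univ j)).trans ?_
    rw [← AdjoinRoot.mk_eq_zero, map_sum, ← hc]
    simp only [AdjoinRoot.smul_mk]
  have hrest : fi j ^ a j ∣
      ∑ i ∈ Finset.univ.erase j, c i • (derivative (fi i) * (f /ₘ fi i)) := by
    refine Finset.dvd_sum fun i hi => ?_
    rw [smul_eq_C_mul]
    exact (pow_dvd_derivative_mul_prod_divByMonic_of_ne hinj hmonic hirr ha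
      (Finset.ne_of_mem_erase hi)).mul_left (C (c i))
  rw [← Finset.add_sum_erase _ _ (Finset.mem_univ j), dvd_add_left hrest, smul_eq_C_mul,
    (isUnit_C.2 (isUnit_iff_ne_zero.2 hcj)).dvd_mul_left] at hsum
  exact not_pow_dvd_derivative_mul_prod_divByMonic hinj hmonic hirr ha j hsum

end Polynomial

theorem FiniteField.mem_range_algebraMap_of_pow_card_eq {K L : Type*} [Field K] [Fintype K]
    [Field L] [Algebra K L] [Finite L] {z : L} (hz : z ^ Fintype.card K = z) :
    z ∈ Set.range (algebraMap K L) := by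
  rw [IsGalois.mem_range_algebraMap_iff_fixed]
  intro σ
  obtain ⟨n, rfl⟩ := (bijective_frobeniusAlgEquivOfAlgebraic_pow K L).2 σ
  rw [AlgEquiv.coe_pow, coe_frobeniusAlgEquivOfAlgebraic]
  exact Function.iterate_fixed (f := fun x : L => x ^ Fintype.card K) hz _

namespace Polynomial

variable {Fq : Type*} [Field Fq] [Fintype Fq]

/-- The operator `u ↦ ψ_q (H^{(q-1)} u)`, with `ψ_q` realised as `Polynomial.contract q`. -/
noncomputable def niederreiterOp : Fq[X] →ₗ[Fq] Fq[X] where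
  toFun u := contract (Fintype.card Fq) (hasseDeriv (Fintype.card Fq - 1) u)
  map_add' u v := by rw [map_add, contract_add Fintype.card_ne_zero]
  map_smul' c u := by ext n; simp [coeff_contract Fintype.card_ne_zero]

theorem coeff_niederreiterOp (u : Fq[X]) (n : ℕ) :
    (niederreiterOp u).coeff n = u.coeff (Fintype.card Fq * n + (Fintype.card Fq - 1)) := by
  obtain ⟨p, _⟩ := CharP.exists Fq
  obtain ⟨e, hp, hcard⟩ := FiniteField.card Fq p
  have : ExpChar Fq p := ExpChar.prime hp
  simp only [niederreiterOp, LinearMap.coe_mk, AddHom.coe_mk,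
    coeff_contract Fintype.card_ne_zero, hasseDeriv_coeff]
  rw [mul_comm n, hcard, natCast_choose_mul_add_pred_eq_one, one_mul]

theorem X_mul_niederreiterOp (u : Fq[X]) :
    X * niederreiterOp u = contract (Fintype.card Fq) (X * u) := by
  ext (_ | n)
  · simp [coeff_contract Fintype.card_ne_zero]
  · have hidx : (n + 1) * Fintype.card Fq =
        Fintype.card Fq * n + (Fintype.card Fq - 1) + 1 := by
      have := Fintype.card_pos (α := Fq); rw [add_one_mul, mul_comm]; omega
    rw [coeff_X_mul, coeff_contract Fintype.card_ne_zero, hidx, coeff_X_mul,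
      coeff_niederreiterOp]

theorem niederreiterOp_pow_card_mul (g u : Fq[X]) :
    niederreiterOp (g ^ Fintype.card Fq * u) = g * niederreiterOp u := by
  refine mul_left_cancel₀ X_ne_zero ?_
  rw [X_mul_niederreiterOp, mul_left_comm X g, X_mul_niederreiterOp, mul_comm g,
    ← contract_mul_expand Fintype.card_ne_zero, FiniteField.expand_card]
  ring_nf

theorem niederreiterOp_pow_pred_mul_derivative (g : Fq[X]) :
    niederreiterOp (g ^ (Fintype.card Fq - 1) * derivative g) = derivative g := by
  ext n
  rw [coeff_niederreiterOp, coeff_pow_pred_mul_derivative g Fintype.card_pos,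
    ← FiniteField.expand_card, coeff_expand_mul' Fintype.card_pos, coeff_derivative, mul_comm]

theorem degree_niederreiterOp_pow_pred_mul_lt {u A : Fq[X]} (hA : degree A < degree u) :
    degree (niederreiterOp (u ^ (Fintype.card Fq - 1) * A)) < degree u := by
  have hu : u ≠ 0 := by rintro rfl; simp at hA
  rcases eq_or_ne A 0 with rfl | hA0
  · simpa using hA
  have hlt : A.natDegree < u.natDegree := natDegree_lt_natDegree hA0 hA
  rw [degree_eq_natDegree hu, degree_lt_iff_coeff_zero]
  intro m hm
  replace hm : u.natDegree ≤ m := by exact_mod_cast hm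
  rw [coeff_niederreiterOp]
  refine coeff_eq_zero_of_natDegree_lt ((natDegree_mul_le.trans
    (add_le_add_left natDegree_pow_le _)).trans_lt ?_)
  have := Nat.mul_le_mul_left (Fintype.card Fq - 1) hm
  have : Fintype.card Fq * m = (Fintype.card Fq - 1) * m + m := by
    have := Fintype.card_pos (α := Fq)
    rw [← add_one_mul, Nat.sub_one_add_one this.ne']
  omega

/-- `h` is the reduced representative (`deg h < deg f`) of a fixed point of `D` on
`F_q[x]/(f)`. -/
def IsNiederreiterFixed (f h : Fq[X]) : Prop :=
  degree h < degree f ∧ niederreiterOp (f ^ (Fintype.card Fq - 1) * h) = h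

namespace IsNiederreiterFixed

theorem of_mul_left {g f h : Fq[X]} (hg : g ≠ 0) (hfix : IsNiederreiterFixed (g * f) (g * h)) :
    IsNiederreiterFixed f h := by
  obtain ⟨hdeg, heq⟩ := hfix
  refine ⟨?_, mul_left_cancel₀ hg ?_⟩
  · rwa [degree_mul, degree_mul, WithBot.add_lt_add_iff_left (degree_eq_bot.not.2 hg)] at hdeg
  · rw [← niederreiterOp_pow_card_mul, ← pow_sub_one_mul Fintype.card_ne_zero, ← heq,
      mul_pow]
    ring_nf

theorem dvd_of_pow_card_dvd {g f h : Fq[X]} (hfix : IsNiederreiterFixed f h)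
    (hg : g ^ Fintype.card Fq ∣ f ^ (Fintype.card Fq - 1)) : g ∣ h := by
  obtain ⟨w, hw⟩ := hg
  rw [← hfix.2, hw, mul_assoc, niederreiterOp_pow_card_mul]
  exact dvd_mul_right _ _

theorem exists_eq_smul_derivative {g h : Fq[X]} (hirr : Irreducible g)
    (hfix : IsNiederreiterFixed g h) : ∃ c : Fq, h = c • derivative g := by
  have := Fact.mk hirr
  have := (AdjoinRoot.powerBasis hirr.ne_zero).finite
  have : Finite (AdjoinRoot g) := Module.finite_of_finite Fq
  set π := AdjoinRoot.mk g
  have hg' : π (derivative g) ≠ 0 := by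
    rw [Ne, AdjoinRoot.mk_eq_zero]
    exact not_dvd_derivative_of_irreducible hirr
  -- Frobenius is onto the finite field `F_q[x]/(g)`, so `h = z^q g' + g w` for some `z`, `w`.
  obtain ⟨ζ, hζ⟩ := (FiniteField.frobeniusAlgEquivOfAlgebraic Fq (AdjoinRoot g)).surjective
    (π h / π (derivative g))
  obtain ⟨z, rfl⟩ := AdjoinRoot.mk_surjective ζ
  replace hζ : π z ^ Fintype.card Fq * π (derivative g) = π h := by
    rw [← div_mul_cancel₀ (π h) hg', ← hζ]; rfl
  obtain ⟨w, hw⟩ : g ∣ h - z ^ Fintype.card Fq * derivative g := by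
    rw [← AdjoinRoot.mk_eq_zero, map_sub, map_mul, map_pow, hζ, sub_self]
  have hsplit : g ^ (Fintype.card Fq - 1) * h =
      z ^ Fintype.card Fq * (g ^ (Fintype.card Fq - 1) * derivative g) +
        g ^ Fintype.card Fq * w := by
    rw [eq_add_of_sub_eq' hw, ← pow_sub_one_mul Fintype.card_ne_zero g]
    ring
  have hπ : π h = π z * π (derivative g) := by
    rw [← hfix.2, hsplit, map_add, niederreiterOp_pow_card_mul, niederreiterOp_pow_card_mul,
      niederreiterOp_pow_pred_mul_derivative]
    simp [π, AdjoinRoot.mk_self]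
  obtain ⟨c, hc⟩ : π z ∈ Set.range (algebraMap Fq (AdjoinRoot g)) :=
    FiniteField.mem_range_algebraMap_of_pow_card_eq (mul_right_cancel₀ hg' (hζ.trans hπ))
  refine ⟨c, eq_of_sub_eq_zero (eq_zero_of_dvd_of_degree_lt (p := g) ?_ ?_)⟩
  · rw [← AdjoinRoot.mk_eq_zero, map_sub, ← AdjoinRoot.smul_mk, Algebra.smul_def, hc, ← hπ,
      sub_self]
  · exact (degree_sub_le _ _).trans_lt (max_lt hfix.1
      ((degree_smul_le _ _).trans_lt (degree_derivative_lt hirr.ne_zero)))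

theorem exists_eq_smul_derivative_mul_pow {g h : Fq[X]} (hirr : Irreducible g) (a : ℕ)
    (hfix : IsNiederreiterFixed (g ^ (a + 1)) h) :
    ∃ c : Fq, h = c • (derivative g * g ^ a) := by
  induction a generalizing h with
  | zero => simpa using exists_eq_smul_derivative hirr (by simpa using hfix)
  | succ a ih =>
    have hq := Fintype.one_lt_card (α := Fq)
    obtain ⟨h₁, rfl⟩ := hfix.dvd_of_pow_card_dvd (g := g) <| by
      rw [← pow_mul]
      exact pow_dvd_pow g (by nlinarith [Nat.sub_add_cancel hq.le])
    rw [pow_succ'] at hfix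
    obtain ⟨c, rfl⟩ := ih (hfix.of_mul_left hirr.ne_zero)
    exact ⟨c, by rw [mul_smul_comm]; ring_nf⟩

theorem exists_of_isCoprime {u v h : Fq[X]} (hu : u.Monic) (huv : IsCoprime u v)
    (hfix : IsNiederreiterFixed (u * v) h) :
    ∃ A B, IsNiederreiterFixed u A ∧ IsNiederreiterFixed v B ∧ h = A * v + B * u := by
  obtain ⟨A, B, hA, hB, rfl⟩ := exists_eq_mul_add_mul_of_isCoprime hu huv hfix.1
  have hsplit : (u * v) ^ (Fintype.card Fq - 1) * (A * v + B * u) =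
      v ^ Fintype.card Fq * (u ^ (Fintype.card Fq - 1) * A) +
        u ^ Fintype.card Fq * (v ^ (Fintype.card Fq - 1) * B) := by
    rw [← pow_sub_one_mul Fintype.card_ne_zero u, ← pow_sub_one_mul Fintype.card_ne_zero v]
    ring
  have h := hfix.2
  rw [hsplit, map_add, niederreiterOp_pow_card_mul, niederreiterOp_pow_card_mul, mul_comm v,
    mul_comm u] at h
  obtain ⟨hA', hB'⟩ := eq_and_eq_of_mul_add_mul_eq huv hA
    (degree_niederreiterOp_pow_pred_mul_lt hA) h.symm
  exact ⟨A, B, ⟨hA, hA'.symm⟩, ⟨hB, hB'.symm⟩, rfl⟩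

theorem exists_eq_sum {ι : Type*} [DecidableEq ι] {fi : ι → Fq[X]} {a : ι → ℕ}
    (hinj : Function.Injective fi) (hmonic : ∀ i, (fi i).Monic) (hirr : ∀ i, Irreducible (fi i))
    (ha : ∀ i, 1 ≤ a i) (s : Finset ι) {h : Fq[X]}
    (hfix : IsNiederreiterFixed (∏ i ∈ s, fi i ^ a i) h) :
    ∃ c : ι → Fq,
      h = ∑ i ∈ s, c i • (derivative (fi i) * ((∏ j ∈ s, fi j ^ a j) /ₘ fi i)) := by
  induction s using Finset.induction_on generalizing h with
  | empty =>
    refine ⟨0, ?_⟩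
    simpa [IsNiederreiterFixed, Nat.WithBot.lt_zero_iff] using hfix.1
  | insert j s hj ih =>
    set P := ∏ i ∈ s, fi i ^ a i
    rw [Finset.prod_insert hj] at hfix ⊢
    have hcop : IsCoprime (fi j ^ a j) P :=
      IsCoprime.pow_left <| IsCoprime.prod_right fun i hi => IsCoprime.pow_right <|
        isCoprime_of_monic_of_irreducible_of_ne (hmonic j) (hmonic i) (hirr j) (hirr i)
          (hinj.ne (ne_of_mem_of_not_mem hi hj).symm)
    obtain ⟨A, B, hA, hB, rfl⟩ := hfix.exists_of_isCoprime ((hmonic j).pow _) hcop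
    obtain ⟨b, hb⟩ := Nat.exists_eq_add_of_le' (ha j)
    rw [hb] at hA ⊢
    obtain ⟨c₀, rfl⟩ := hA.exists_eq_smul_derivative_mul_pow (hirr j) b
    obtain ⟨c, rfl⟩ := ih hB
    refine ⟨Function.update c j c₀, ?_⟩
    rw [Finset.sum_insert hj, Function.update_self, Finset.sum_mul]
    congr 1
    · rw [pow_succ', mul_assoc, mul_divByMonic_cancel_left _ (hmonic j), smul_mul_assoc,
        mul_assoc]
    · refine Finset.sum_congr rfl fun i hi => ?_
      rw [Function.update_of_ne (ne_of_mem_of_not_mem hi hj),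
        mul_divByMonic_of_dvd (hmonic i) (Finset.dvd_prod_pow_of_mem hi (ha i)), smul_mul_assoc]
      congr 1
      ring

end IsNiederreiterFixed

theorem isNiederreiterFixed_of_mk_eq {f h : Fq[X]} (hf : f.Monic) (hh : degree h < degree f)
    (hfix : AdjoinRoot.mk f (niederreiterOp (f ^ (Fintype.card Fq - 1) * h)) = AdjoinRoot.mk f h) :
    IsNiederreiterFixed f h := by
  refine ⟨hh, ?_⟩
  have := congrArg (AdjoinRoot.modByMonicHom hf) hfix
  rwa [AdjoinRoot.modByMonicHom_mk, AdjoinRoot.modByMonicHom_mk, (modByMonic_eq_self_iff hf).2 hh,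
    (modByMonic_eq_self_iff hf).2 (degree_niederreiterOp_pow_pred_mul_lt hh)] at this

theorem niederreiterOp_pow_pred_mul_derivative_mul_divByMonic {f g : Fq[X]} (hg : g.Monic)
    (hgf : g ∣ f) :
    niederreiterOp (f ^ (Fintype.card Fq - 1) * (derivative g * (f /ₘ g))) =
      derivative g * (f /ₘ g) := by
  obtain ⟨w, rfl⟩ := hgf
  have hsplit : (g * w) ^ (Fintype.card Fq - 1) * (derivative g * w) =
      w ^ Fintype.card Fq * (g ^ (Fintype.card Fq - 1) * derivative g) := by
    rw [← pow_sub_one_mul Fintype.card_ne_zero w]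
    ring
  rw [mul_divByMonic_cancel_left _ hg, hsplit, niederreiterOp_pow_card_mul,
    niederreiterOp_pow_pred_mul_derivative, mul_comm]

end Polynomial

theorem niederreiter_fixed_space_basis_general
    (Fq : Type) [Field Fq] [Fintype Fq]
    (ψ : Polynomial Fq →ₗ[Fq] Polynomial Fq)
    (hψ : ∀ (g : Polynomial Fq) (n : ℕ),
      (ψ g).coeff n = g.coeff (Fintype.card Fq * n))
    (f : Polynomial Fq)
    (k : ℕ) (fi : Fin k → Polynomial Fq) (a : Fin k → ℕ)
    (hinj : Function.Injective fi)
    (hmonic : ∀ i, (fi i).Monic) (hirr : ∀ i, Irreducible (fi i))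
    (ha : ∀ i, 1 ≤ a i) (hfact : f = ∏ i, fi i ^ a i)
    (D : AdjoinRoot f →ₗ[Fq] AdjoinRoot f)
    (hD : ∀ h : Polynomial Fq,
      D (AdjoinRoot.mk f h) =
        AdjoinRoot.mk f (ψ (Polynomial.hasseDeriv (Fintype.card Fq - 1)
          (f ^ (Fintype.card Fq - 1) * h)))) :
    LinearIndependent Fq
        (fun i : Fin k =>
          AdjoinRoot.mk f (Polynomial.derivative (fi i) * (f /ₘ fi i))) ∧
      Submodule.span Fq
          (Set.range fun i : Fin k =>
            AdjoinRoot.mk f (Polynomial.derivative (fi i) * (f /ₘ fi i))) =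
        LinearMap.ker (D - LinearMap.id) := by
  subst hfact
  have hψ' : ∀ v, ψ v = contract (Fintype.card Fq) v := fun v =>
    ext fun n => by rw [hψ, coeff_contract Fintype.card_ne_zero, mul_comm]
  have hD' : ∀ h, D (AdjoinRoot.mk _ h) =
      AdjoinRoot.mk _ (niederreiterOp ((∏ i, fi i ^ a i) ^ (Fintype.card Fq - 1) * h)) := by
    intro h; rw [hD, hψ']; rfl
  have hf : (∏ i, fi i ^ a i).Monic := monic_prod_of_monic _ _ fun i _ => (hmonic i).pow _
  refine ⟨linearIndependent_mk_derivative_mul_divByMonic hinj hmonic hirr ha,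
    le_antisymm (Submodule.span_le.2 (Set.range_subset_iff.2 fun i => ?_)) fun x hx => ?_⟩
  · rw [SetLike.mem_coe, LinearMap.mem_ker, LinearMap.sub_apply, LinearMap.id_apply, sub_eq_zero,
      hD', niederreiterOp_pow_pred_mul_derivative_mul_divByMonic (hmonic i)
        (Finset.dvd_prod_pow_of_mem (Finset.mem_univ i) (ha i))]
  · obtain ⟨h, rfl⟩ := AdjoinRoot.mk_surjective x
    rw [LinearMap.mem_ker, LinearMap.sub_apply, LinearMap.id_apply, sub_eq_zero,
      ← AdjoinRoot.mk_leftInverse hf (AdjoinRoot.mk _ h), hD', AdjoinRoot.modByMonicHom_mk] at hx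
    obtain ⟨c, hc⟩ := (isNiederreiterFixed_of_mk_eq hf (degree_modByMonic_lt _ hf) hx)
      |>.exists_eq_sum hinj hmonic hirr ha Finset.univ
    rw [← AdjoinRoot.mk_leftInverse hf (AdjoinRoot.mk _ h), AdjoinRoot.modByMonicHom_mk, hc,
      map_sum]
    exact Submodule.sum_mem _ fun i _ => by
      rw [← AdjoinRoot.smul_mk]; exact Submodule.smul_mem _ _ (Submodule.subset_span ⟨i, rfl⟩)

/-- For `f = ∏ f_i^{a_i} ∈ F_q[x]` of degree `d ≥ 1` with the `f_i` distinct monic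
irreducibles, the images in `R = F_q[x]/(f)` of the polynomials `f_i′·(f/f_i)` form an
`F_q`-basis of the fixed space `R_1(D) = {h ∈ R : D h = h}` of the operator `D` induced
by `h ↦ ψ_q(H^{(q-1)}(f^{q-1}·h))`. -/
theorem niederreiter_fixed_space_basis
    (Fq : Type) [Field Fq] [Fintype Fq]
    (ψ : Polynomial Fq →ₗ[Fq] Polynomial Fq)
    (hψ : ∀ (g : Polynomial Fq) (n : ℕ),
      (ψ g).coeff n = g.coeff (Fintype.card Fq * n))
    (f : Polynomial Fq) (d : ℕ) (hd : 1 ≤ d) (hdeg : f.natDegree = d)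
    (k : ℕ) (fi : Fin k → Polynomial Fq) (a : Fin k → ℕ)
    (hinj : Function.Injective fi)
    (hmonic : ∀ i, (fi i).Monic) (hirr : ∀ i, Irreducible (fi i))
    (ha : ∀ i, 1 ≤ a i) (hfact : f = ∏ i, fi i ^ a i)
    (D : AdjoinRoot f →ₗ[Fq] AdjoinRoot f)
    (hD : ∀ h : Polynomial Fq,
      D (AdjoinRoot.mk f h) =
        AdjoinRoot.mk f (ψ (Polynomial.hasseDeriv (Fintype.card Fq - 1)
          (f ^ (Fintype.card Fq - 1) * h)))) :
    LinearIndependent Fq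
        (fun i : Fin k =>
          AdjoinRoot.mk f (Polynomial.derivative (fi i) * (f /ₘ fi i))) ∧
      Submodule.span Fq
          (Set.range fun i : Fin k =>
            AdjoinRoot.mk f (Polynomial.derivative (fi i) * (f /ₘ fi i))) =
        LinearMap.ker (D - LinearMap.id) :=
  niederreiter_fixed_space_basis_general Fq ψ hψ f k fi a hinj hmonic hirr ha hfact D hD
end

section
/- Let f ∈ F_q[x] be a polynomial of degree d ≥ 1 with f(0) ≠ 0, and let R = F_q[x]/(f). Let D be the F_q-linear endomorphism of R induced by h ↦ ψ_q(H^{(q-1)}(f^{q-1}·h)), and let G be the F_q-linear endomorphism of R induced by h ↦ ψ_q(f^{q-1}·h). Then the class of x is a unit in R and D = x^{-1} ∘ G ∘ x as endomorphisms of R; equivalently, for every h ∈ R, x·D(h) = G(x·h). -/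
/-!
On `F_q[x]` the operators `g ↦ x · ψ_q(H^{(q-1)} g)` and `g ↦ ψ_q(x g)` already agree: the
coefficient of `x^(n+1)` is `C(qn + q - 1, q - 1) · g_{qn+q-1}` for the first and `g_{qn+q-1}`
for the second, and by Lucas's theorem `C(qn + q - 1, q - 1) ≡ 1 (mod p)`, since every base-`p`
digit of `q - 1` is `p - 1`. Applying this to `f^(q-1) h` gives `x · D = G ∘ x`. Finally `x` is
a unit modulo `f` because `f = x · (f div x) + f(0)` with `f(0)` invertible.
-/

open Polynomial

theorem Nat.choose_pow_mul_add_pow_sub_one_modEq_one (p : ℕ) [hp : Fact p.Prime] (e m : ℕ) :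
    (p ^ e * m + (p ^ e - 1)).choose (p ^ e - 1) ≡ 1 [MOD p] := by
  induction e with
  | zero => simp [Nat.ModEq.refl]
  | succ e ih =>
    have hp0 : 0 < p := hp.out.pos
    have hlt : p - 1 < p := Nat.sub_lt hp0 one_pos
    have hq : 1 ≤ p ^ e := Nat.one_le_pow _ _ hp0
    have hn : p ^ (e + 1) * m + (p ^ (e + 1) - 1) = p * (p ^ e * m + (p ^ e - 1)) + (p - 1) := by
      rw [pow_succ', mul_add, Nat.mul_sub, mul_one, mul_assoc]
      have := Nat.mul_le_mul_left p hq
      omega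
    have hk : p ^ (e + 1) - 1 = p * (p ^ e - 1) + (p - 1) := by
      rw [pow_succ', Nat.mul_sub, mul_one]
      have := Nat.mul_le_mul_left p hq
      omega
    rw [hn, hk]
    refine Choose.choose_modEq_choose_mod_mul_choose_div_nat.trans ?_
    simpa only [Nat.mul_add_mod, Nat.mul_add_div hp0, Nat.mod_eq_of_lt hlt, Nat.div_eq_of_lt hlt,
      Nat.choose_self, add_zero, one_mul] using ih

theorem Nat.cast_choose_pow_mul_add_pow_sub_one (R : Type*) [Ring R] (p : ℕ) [Fact p.Prime]
    [CharP R p] (e m : ℕ) : ((p ^ e * m + (p ^ e - 1)).choose (p ^ e - 1) : R) = 1 := by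
  exact_mod_cast (CharP.natCast_eq_natCast R p).mpr
    (Nat.choose_pow_mul_add_pow_sub_one_modEq_one p e m)

theorem X_mul_apply_hasseDeriv_pow_sub_one {R : Type*} [CommRing R] (p : ℕ) [Fact p.Prime]
    [CharP R p] (e : ℕ) (ψ : R[X] → R[X]) (hψ : ∀ g n, (ψ g).coeff n = g.coeff (p ^ e * n))
    (g : R[X]) :
    X * ψ (hasseDeriv (p ^ e - 1) g) = ψ (X * g) := by
  ext (_ | n)
  · simp [hψ, mul_coeff_zero]
  · have h : p ^ e * (n + 1) = p ^ e * n + (p ^ e - 1) + 1 := by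
      have := Nat.one_le_pow e p (Fact.out : p.Prime).pos
      rw [mul_add_one]; omega
    rw [coeff_X_mul, hψ, hψ, hasseDeriv_coeff, h, coeff_X_mul,
      Nat.cast_choose_pow_mul_add_pow_sub_one, one_mul]

theorem AdjoinRoot.isUnit_mk_X_of_isUnit_coeff_zero {R : Type*} [CommRing R] {f : R[X]}
    (hf : IsUnit (f.coeff 0)) : IsUnit (AdjoinRoot.mk f X) := by
  have h : AdjoinRoot.mk f X * AdjoinRoot.mk f f.divX = -AdjoinRoot.of f (f.coeff 0) := by
    rw [← map_mul, eq_neg_iff_add_eq_zero, AdjoinRoot.of, RingHom.comp_apply, ← map_add,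
      X_mul_divX_add, AdjoinRoot.mk_self]
  exact isUnit_of_mul_isUnit_left (h ▸ (hf.map _).neg)

theorem D_conjugate_to_G_general
    (Fq : Type) [Field Fq] [Fintype Fq]
    (ψ : Polynomial Fq →ₗ[Fq] Polynomial Fq)
    (hψ : ∀ (g : Polynomial Fq) (n : ℕ),
      (ψ g).coeff n = g.coeff (Fintype.card Fq * n))
    (f : Polynomial Fq) (h0 : f.eval 0 ≠ 0)
    (D : AdjoinRoot f →ₗ[Fq] AdjoinRoot f)
    (hD : ∀ h : Polynomial Fq,
      D (AdjoinRoot.mk f h) =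
        AdjoinRoot.mk f (ψ (Polynomial.hasseDeriv (Fintype.card Fq - 1)
          (f ^ (Fintype.card Fq - 1) * h))))
    (G : AdjoinRoot f →ₗ[Fq] AdjoinRoot f)
    (hG : ∀ h : Polynomial Fq,
      G (AdjoinRoot.mk f h) =
        AdjoinRoot.mk f (ψ (f ^ (Fintype.card Fq - 1) * h))) :
    IsUnit (AdjoinRoot.mk f Polynomial.X) ∧
      ∀ y : AdjoinRoot f,
        AdjoinRoot.mk f Polynomial.X * D y = G (AdjoinRoot.mk f Polynomial.X * y) := by
  refine ⟨AdjoinRoot.isUnit_mk_X_of_isUnit_coeff_zero ?_, fun y ↦ ?_⟩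
  · rw [coeff_zero_eq_eval_zero]
    exact h0.isUnit
  obtain ⟨p, _⟩ := CharP.exists Fq
  have : Fact p.Prime := ⟨CharP.char_is_prime Fq p⟩
  obtain ⟨e, -, hq⟩ := FiniteField.card Fq p
  obtain ⟨h, rfl⟩ := AdjoinRoot.mk_surjective y
  rw [hq] at hψ hD hG
  rw [hD, ← map_mul, ← map_mul, hG, X_mul_apply_hasseDeriv_pow_sub_one p e ψ hψ,
    mul_left_comm]

/-- If `f ∈ F_q[x]` has degree `d ≥ 1` and `f(0) ≠ 0`, then the class of `x` is a unit in
`R = F_q[x]/(f)` and `D = x⁻¹ ∘ G ∘ x`, i.e. `x·D(h) = G(x·h)` for all `h ∈ R`, where `D`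
and `G` are induced by `h ↦ ψ_q(H^{(q-1)}(f^{q-1}·h))` and `h ↦ ψ_q(f^{q-1}·h)`. -/
theorem D_conjugate_to_G
    (Fq : Type) [Field Fq] [Fintype Fq]
    (ψ : Polynomial Fq →ₗ[Fq] Polynomial Fq)
    (hψ : ∀ (g : Polynomial Fq) (n : ℕ),
      (ψ g).coeff n = g.coeff (Fintype.card Fq * n))
    (f : Polynomial Fq) (hd : 1 ≤ f.natDegree) (h0 : f.eval 0 ≠ 0)
    (D : AdjoinRoot f →ₗ[Fq] AdjoinRoot f)
    (hD : ∀ h : Polynomial Fq,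
      D (AdjoinRoot.mk f h) =
        AdjoinRoot.mk f (ψ (Polynomial.hasseDeriv (Fintype.card Fq - 1)
          (f ^ (Fintype.card Fq - 1) * h))))
    (G : AdjoinRoot f →ₗ[Fq] AdjoinRoot f)
    (hG : ∀ h : Polynomial Fq,
      G (AdjoinRoot.mk f h) =
        AdjoinRoot.mk f (ψ (f ^ (Fintype.card Fq - 1) * h))) :
    IsUnit (AdjoinRoot.mk f Polynomial.X) ∧
      ∀ y : AdjoinRoot f,
        AdjoinRoot.mk f Polynomial.X * D y = G (AdjoinRoot.mk f Polynomial.X * y) :=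
  D_conjugate_to_G_general Fq ψ hψ f h0 D hD G hG
end

section
/- Let f ∈ F_q[x] be a polynomial of degree d ≥ 1 and let R = F_q[x]/(f). Let F be the F_q-linear endomorphism of R induced by h ↦ h^q, and let D be the F_q-linear endomorphism of R induced by h ↦ ψ_q(H^{(q-1)}(f^{q-1}·h)). Then there exists a nondegenerate F_q-bilinear form B : R × R → F_q such that B(F(a), b) = B(a, D(b)) for all a, b ∈ R. -/
/-!
Normalize `f` to the monic `g` (note `f ^ (q - 1) = g ^ (q - 1)`) and take the trace form
`B(a, b) = res(a b)`, where `res u` is the coefficient of `X ^ (d - 1)` in `u mod g`. It is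
nondegenerate because `res (r X ^ k)` picks out the leading coefficient of a nonzero remainder `r`.
Since `C(q n + q - 1, q - 1) = 1` in `F_q`, the map `S = ψ_q ∘ H^(q-1)` sends `w` to
`∑ₙ w_{q n + q - 1} X ^ n`; it is a Cartier operator: `S (u ^ q w) = u S w`. Writing `w = r + g t`
with `deg r < d`, this gives `S (g ^ (q - 1) w) ≡ S (g ^ (q - 1) r) (mod g)`, a polynomial of
degree `< d` whose coefficient of `X ^ (d - 1)` is that of `g ^ (q - 1) r` at `q d - 1`, i.e.
`res w`. Hence
`res (a ^ q b) = res (S (g ^ (q - 1) a ^ q b)) = res (a S (g ^ (q - 1) b)) = res (a D b)`.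
-/

open Polynomial

theorem FiniteField.cast_choose_card_mul_add_card_sub_one (K : Type*) [Field K] [Fintype K]
    (n : ℕ) :
    (((Fintype.card K * n + (Fintype.card K - 1)).choose (Fintype.card K - 1) : ℕ) : K) = 1 := by
  set q := Fintype.card K
  obtain ⟨r, hr⟩ : (X : K[X]) ^ q ∣ (1 + X ^ q) ^ n - 1 := by
    have h := sub_dvd_pow_sub_pow ((1 : K[X]) + X ^ q) 1 n
    rwa [add_sub_cancel_left, one_pow] at h
  have hfrob : (1 + X : K[X]) ^ q = 1 + X ^ q := by
    rw [← FiniteField.expand_card, map_add, map_one, expand_X]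
  have hsplit : (1 + X : K[X]) ^ (q * n + (q - 1))
      = (1 + X) ^ (q - 1) + (r * (1 + X) ^ (q - 1)) * X ^ q := by
    rw [pow_add, pow_mul, hfrob, sub_eq_iff_eq_add.mp hr]; ring
  rw [← coeff_one_add_X_pow, hsplit, coeff_add, coeff_mul_X_pow',
    if_neg (Nat.sub_lt Fintype.card_pos one_pos).not_ge, add_zero, coeff_one_add_X_pow,
    Nat.choose_self, Nat.cast_one]

namespace Polynomial

variable {R : Type*} [CommSemiring R]

/-- Via `w ↦ w dX`, this is the `q`-th power Cartier operator on differentials. -/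
def IsCartierOperator (q : ℕ) (S : R[X] →ₗ[R] R[X]) : Prop :=
  ∀ w n, (S w).coeff n = w.coeff (q * n + (q - 1))

namespace IsCartierOperator

variable {q : ℕ} {S : R[X] →ₗ[R] R[X]}

theorem map_X_pow_mul (hS : IsCartierOperator q S) (hq : 0 < q) (m : ℕ) (w : R[X]) :
    S (X ^ (q * m) * w) = X ^ m * S w := by
  ext n
  rw [hS, coeff_X_pow_mul', coeff_X_pow_mul']
  by_cases hmn : m ≤ n
  · obtain ⟨t, rfl⟩ := Nat.exists_eq_add_of_le hmn
    rw [if_pos (by nlinarith), if_pos hmn, hS, Nat.add_sub_cancel_left, mul_add, add_assoc,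
      Nat.add_sub_cancel_left]
  · refine (if_neg fun h => hmn ?_).trans (if_neg hmn).symm
    exact Nat.lt_succ_iff.mp (Nat.lt_of_mul_lt_mul_left (a := q) (by rw [Nat.mul_succ]; omega))

theorem map_expand_mul (hS : IsCartierOperator q S) (hq : 0 < q) (u w : R[X]) :
    S (expand R q u * w) = u * S w := by
  induction u using Polynomial.induction_on' with
  | add u v hu hv => rw [map_add, add_mul, map_add, hu, hv, add_mul]
  | monomial n c =>
    rw [expand_monomial, ← C_mul_X_pow_eq_monomial, ← C_mul_X_pow_eq_monomial, mul_comm n q,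
      mul_assoc, ← smul_eq_C_mul, map_smul, hS.map_X_pow_mul hq, smul_eq_C_mul, mul_assoc]

theorem degree_lt (hS : IsCartierOperator q S) {r : R[X]} {m : ℕ} (hr : r.degree < ↑(q * m)) :
    (S r).degree < m := by
  rw [degree_lt_iff_coeff_zero] at hr ⊢
  intro n hn
  rw [hS]
  exact hr _ (le_add_right (Nat.mul_le_mul_left q hn))

end IsCartierOperator

theorem isCartierOperator_comp_hasseDeriv {K : Type*} [Field K] [Fintype K]
    {ψ : K[X] →ₗ[K] K[X]} (hψ : ∀ w n, (ψ w).coeff n = w.coeff (Fintype.card K * n)) :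
    IsCartierOperator (Fintype.card K) (ψ ∘ₗ hasseDeriv (Fintype.card K - 1)) := fun w n => by
  rw [LinearMap.comp_apply, hψ, hasseDeriv_coeff,
    FiniteField.cast_choose_card_mul_add_card_sub_one, one_mul]

end Polynomial

namespace AdjoinRoot

section CommRing

variable {R : Type*} [CommRing R] {g : R[X]}

/-- `residue hg (mk g u)` is the sum of the residues of `u / g` at the roots of `g`. -/
noncomputable def residue (hg : g.Monic) : AdjoinRoot g →ₗ[R] R :=
  lcoeff R (g.natDegree - 1) ∘ₗ modByMonicHom hg

theorem residue_mk (hg : g.Monic) (u : R[X]) :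
    residue hg (mk g u) = (u %ₘ g).coeff (g.natDegree - 1) :=
  rfl

theorem residue_mk_of_degree_lt (hg : g.Monic) {u : R[X]} (hu : u.degree < g.degree) :
    residue hg (mk g u) = u.coeff (g.natDegree - 1) := by
  nontriviality R
  rw [residue_mk, (modByMonic_eq_self_iff hg).mpr hu]

theorem eq_zero_of_forall_residue_mul_eq_zero (hg : g.Monic) {a : AdjoinRoot g}
    (ha : ∀ b, residue hg (a * b) = 0) : a = 0 := by
  obtain ⟨u, rfl⟩ := mk_surjective a
  nontriviality R
  set r := u %ₘ g
  have hur : mk g u = mk g r := (mk_leftInverse hg (mk g u)).symm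
  rw [hur] at ha ⊢
  by_contra hr
  replace hr : r ≠ 0 := fun h => hr (by rw [h, map_zero])
  have hrg : r.natDegree < g.natDegree := natDegree_lt_natDegree hr (degree_modByMonic_lt u hg)
  set k := g.natDegree - 1 - r.natDegree
  have hdeg : (r * X ^ k).degree < g.degree := by
    rw [degree_mul_X_pow, degree_eq_natDegree hr, degree_eq_natDegree hg.ne_zero]
    exact_mod_cast (by omega : r.natDegree + k < g.natDegree)
  have hlead := ha (mk g (X ^ k))
  rw [← map_mul, residue_mk_of_degree_lt hg hdeg,
    show g.natDegree - 1 = r.natDegree + k by omega, coeff_mul_X_pow] at hlead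
  exact hr (leadingCoeff_eq_zero.mp hlead)

end CommRing

section FiniteField

variable {K : Type*} [Field K] [Fintype K] {S : K[X] →ₗ[K] K[X]} {g : K[X]}

theorem residue_mk_cartier_pow_mul (hS : IsCartierOperator (Fintype.card K) S)
    (hg : g.Monic) (w : K[X]) :
    residue hg (mk g (S (g ^ (Fintype.card K - 1) * w))) = residue hg (mk g w) := by
  set q := Fintype.card K
  have hq : 0 < q := Fintype.card_pos
  set d := g.natDegree
  rcases Nat.eq_zero_or_pos d with hd | hd
  · rw [residue_mk, residue_mk, hg.natDegree_eq_zero.mp hd, modByMonic_one, modByMonic_one]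
  set r := w %ₘ g
  have hr : r.natDegree ≤ d - 1 :=
    Nat.le_sub_one_of_lt (natDegree_modByMonic_lt w hg fun h => by simp [d, h] at hd)
  -- `g ^ q = expand q g` over a finite field
  have hS_mod : mk g (S (g ^ (q - 1) * w)) = mk g (S (g ^ (q - 1) * r)) := by
    have hsplit : g ^ (q - 1) * w = g ^ (q - 1) * r + expand K q g * (w /ₘ g) := by
      conv_lhs => rw [← modByMonic_add_div w g]
      rw [FiniteField.expand_card, mul_add, ← mul_assoc, ← pow_succ, Nat.sub_add_cancel hq]
    rw [hsplit, map_add, hS.map_expand_mul hq, map_add, map_mul (mk g), mk_self, zero_mul,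
      add_zero]
  obtain ⟨q', hq'⟩ := Nat.exists_eq_add_one_of_ne_zero hq.ne'
  obtain ⟨d', hd'⟩ := Nat.exists_eq_add_one_of_ne_zero hd.ne'
  have hidx : q * (d - 1) + (q - 1) = (q - 1) * d + (d - 1) := by
    rw [hq', hd', Nat.add_sub_cancel, Nat.add_sub_cancel]; ring
  have hdeg : (g ^ (q - 1) * r).degree < ↑(q * d) := by
    refine degree_le_natDegree.trans_lt (WithBot.coe_lt_coe.mpr ?_)
    calc (g ^ (q - 1) * r).natDegree ≤ (q - 1) * d + (d - 1) :=
          natDegree_mul_le_of_le (hg.natDegree_pow _).le hr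
      _ < q * d := by rw [hq', hd', Nat.add_sub_cancel, Nat.add_sub_cancel]; nlinarith
  have hgd : g.degree = d := degree_eq_natDegree hg.ne_zero
  rw [hS_mod, (mk_leftInverse hg (mk g w)).symm, modByMonicHom_mk,
    residue_mk_of_degree_lt hg (hgd ▸ hS.degree_lt hdeg),
    residue_mk_of_degree_lt hg (degree_modByMonic_lt w hg), hS, hidx, ← hg.natDegree_pow,
    coeff_mul_add_eq_of_natDegree_le le_rfl hr, (hg.pow _).coeff_natDegree, one_mul]

theorem residue_pow_card_mul_mk (hS : IsCartierOperator (Fintype.card K) S)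
    (hg : g.Monic) (a : AdjoinRoot g) (v : K[X]) :
    residue hg (a ^ Fintype.card K * mk g v)
      = residue hg (a * mk g (S (g ^ (Fintype.card K - 1) * v))) := by
  obtain ⟨u, rfl⟩ := mk_surjective a
  rw [← map_pow, ← map_mul, ← map_mul, ← residue_mk_cartier_pow_mul hS hg, mul_left_comm,
    ← FiniteField.expand_card, hS.map_expand_mul Fintype.card_pos]

end FiniteField

end AdjoinRoot

open AdjoinRoot in
/-- There is a nondegenerate `F_q`-bilinear form on `R = F_q[x]/(f)` with respect to which
the Frobenius `F : h ↦ h^q` and the operator `D` induced by `h ↦ ψ_q(H^{(q-1)}(f^{q-1}·h))`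
are dual to each other. -/
theorem frobenius_dual_to_D
    (Fq : Type) [Field Fq] [Fintype Fq]
    (ψ : Polynomial Fq →ₗ[Fq] Polynomial Fq)
    (hψ : ∀ (g : Polynomial Fq) (n : ℕ),
      (ψ g).coeff n = g.coeff (Fintype.card Fq * n))
    (f : Polynomial Fq) (hd : 1 ≤ f.natDegree)
    (F : AdjoinRoot f →ₗ[Fq] AdjoinRoot f)
    (hF : ∀ y, F y = y ^ Fintype.card Fq)
    (D : AdjoinRoot f →ₗ[Fq] AdjoinRoot f)
    (hD : ∀ h : Polynomial Fq,
      D (AdjoinRoot.mk f h) =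
        AdjoinRoot.mk f (ψ (Polynomial.hasseDeriv (Fintype.card Fq - 1)
          (f ^ (Fintype.card Fq - 1) * h)))) :
    ∃ B : AdjoinRoot f →ₗ[Fq] AdjoinRoot f →ₗ[Fq] Fq,
      (∀ a, (∀ b, B a b = 0) → a = 0) ∧
      (∀ b, (∀ a, B a b = 0) → b = 0) ∧
      ∀ a b, B (F a) b = B a (D b) := by
  have hf : f ≠ 0 := ne_zero_of_natDegree_gt hd
  set g := f * C f.leadingCoeff⁻¹
  have hg : g.Monic := monic_mul_leadingCoeff_inv hf
  have hfg : f ^ (Fintype.card Fq - 1) = g ^ (Fintype.card Fq - 1) := by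
    rw [mul_pow, ← C_pow, inv_pow,
      FiniteField.pow_card_sub_one_eq_one _ (leadingCoeff_ne_zero.mpr hf), inv_one, C_1, mul_one]
  let e : AdjoinRoot f ≃ₐ[Fq] AdjoinRoot g := Ideal.quotientEquivAlgOfEq Fq
    (Ideal.span_singleton_mul_right_unit
      (isUnit_C.mpr (inv_ne_zero (leadingCoeff_ne_zero.mpr hf)).isUnit) f).symm
  have he : ∀ u, e (mk f u) = mk g u := Ideal.quotientEquivAlgOfEq_mk Fq _
  let B := ((LinearMap.mul Fq _).compr₂ (residue hg)).compl₁₂ e.toLinearMap e.toLinearMap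
  have hB : ∀ a b, B a b = residue hg (e a * e b) := fun _ _ => rfl
  have hB_left : ∀ a, (∀ b, B a b = 0) → a = 0 := fun a ha =>
    e.injective <| (eq_zero_of_forall_residue_mul_eq_zero hg fun b => by
      rw [← e.apply_symm_apply b, ← hB, ha]).trans (map_zero e).symm
  refine ⟨B, hB_left, fun b hb => hB_left b fun a => by rw [hB, mul_comm, ← hB, hb], ?_⟩
  intro a b
  obtain ⟨v, rfl⟩ := mk_surjective b
  rw [hB, hB, hF, hD, map_pow, he, he, hfg]
  exact residue_pow_card_mul_mk (isCartierOperator_comp_hasseDeriv hψ) hg (e a) v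
end

section
/- Let f ∈ F_q[x] be a polynomial of degree d ≥ 1 with f(0) ≠ 0 and let R = F_q[x]/(f). Let F be the F_q-linear endomorphism of R induced by h ↦ h^q, and let G be the F_q-linear endomorphism of R induced by h ↦ ψ_q(f^{q-1}·h). Then there exists a nondegenerate F_q-bilinear form B : R × R → F_q such that B(F(a), b) = B(a, G(b)) for all a, b ∈ R. -/
/-!
Take the bilinear form `B(a, b) = ℓ(ab)`, where `ℓ` reads off the constant coefficient of the
remainder modulo `f`. It is nondegenerate because the ideal of a nonzero `a = [g]` contains
`[c]` for `c = gcd(g mod f, f)`, which is reduced and has `c(0) ∣ f(0) ≠ 0`.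
The operator `ψ_q` is Mathlib's `Polynomial.contract q`, and `ψ_q(g^q w) = g ψ_q(w)`. Writing
`g^q h = f Q + r` with `deg r < deg f` therefore gives
`g ψ_q(f^{q-1} h) = f ψ_q(Q) + ψ_q(f^{q-1} r)`, whose last term is already reduced and has
constant coefficient `f(0)^{q-1} r(0) = r(0)`; so `ℓ(F(a) b) = r(0) = ℓ(a G(b))`.
-/

open Polynomial

namespace Polynomial

variable {R : Type*} [CommSemiring R]

theorem degree_contract_lt {p d : ℕ} (hp : p ≠ 0) {g : R[X]} (hg : g.degree < (d * p : ℕ)) :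
    (contract p g).degree < d := by
  refine (degree_lt_iff_coeff_zero _ _).2 fun m hm => ?_
  rw [coeff_contract hp]
  exact coeff_eq_zero_of_degree_lt (hg.trans_le (by exact_mod_cast Nat.mul_le_mul_right p hm))

theorem degree_contract_pow_sub_one_mul_lt [NoZeroDivisors R] {p : ℕ} (hp : p ≠ 0)
    {f r : R[X]} (hr : r.degree < f.degree) : (contract p (f ^ (p - 1) * r)).degree < f.degree := by
  have hf : f ≠ 0 := ne_zero_of_degree_gt hr
  have : Nontrivial R := nontrivial_of_ne _ _ (mt leadingCoeff_eq_zero.1 hf)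
  rw [degree_eq_natDegree hf] at hr ⊢
  refine degree_contract_lt hp ?_
  obtain ⟨m, rfl⟩ := Nat.exists_eq_succ_of_ne_zero hp
  rw [Nat.succ_sub_one, degree_mul, degree_pow, degree_eq_natDegree hf, Nat.mul_succ,
    Nat.cast_add, Nat.cast_mul, nsmul_eq_mul, mul_comm]
  exact WithBot.add_lt_add_left (by exact_mod_cast WithBot.coe_ne_bot) hr

end Polynomial

namespace AdjoinRoot

variable {K : Type*} [Field K] (f : K[X])

noncomputable def remConstCoeff : AdjoinRoot f →ₗ[K] K :=
  (Submodule.liftQ ((Ideal.span {f}).restrictScalars K)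
      ((lcoeff K 0).comp (Polynomial.modByMonicHom (f * C f.leadingCoeff⁻¹)))
      fun g hg => by
        simp [Polynomial.modByMonicHom_apply, ← mod_def,
          EuclideanDomain.mod_eq_zero.2 (Ideal.mem_span_singleton.1 hg)]).comp
    (Submodule.Quotient.restrictScalarsEquiv K (Ideal.span {f} : Ideal K[X])).symm.toLinearMap

theorem remConstCoeff_mk (g : K[X]) : remConstCoeff f (mk f g) = (g % f).coeff 0 := rfl

theorem mk_mod (g : K[X]) : mk f (g % f) = mk f g :=
  mk_eq_mk.2 ⟨-(g / f), by rw [EuclideanDomain.mod_eq_sub_mul_div]; ring⟩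

noncomputable def remForm : AdjoinRoot f →ₗ[K] AdjoinRoot f →ₗ[K] K :=
  (LinearMap.mul K (AdjoinRoot f)).compr₂ (remConstCoeff f)

theorem remForm_apply (a b : AdjoinRoot f) : remForm f a b = remConstCoeff f (a * b) := rfl

theorem remForm_flip : (remForm f).flip = remForm f := by
  ext a b
  simp only [LinearMap.flip_apply, remForm_apply, mul_comm]

variable {f}

theorem remConstCoeff_mk_of_degree_lt {r : K[X]} (hr : r.degree < f.degree) :
    remConstCoeff f (mk f r) = r.coeff 0 := by
  rw [remConstCoeff_mk, (mod_eq_self_iff (ne_zero_of_degree_gt hr)).2 hr]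

theorem exists_remConstCoeff_mul_ne_zero (h0 : f.eval 0 ≠ 0) {a : AdjoinRoot f} (ha : a ≠ 0) :
    ∃ b, remConstCoeff f (a * b) ≠ 0 := by
  classical
  have hf : f ≠ 0 := by rintro rfl; simp at h0
  obtain ⟨g, rfl⟩ := mk_surjective a
  have hr : g % f ≠ 0 := fun hr => ha (by rw [← mk_mod, hr, map_zero])
  set c := EuclideanDomain.gcd (g % f) f
  refine ⟨mk f (EuclideanDomain.gcdA (g % f) f), ?_⟩
  have hc : mk f g * mk f (EuclideanDomain.gcdA (g % f) f) = mk f c := by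
    rw [← mk_mod, ← map_mul, mk_eq_mk]
    exact ⟨-EuclideanDomain.gcdB (g % f) f, by
      linear_combination -EuclideanDomain.gcd_eq_gcd_ab (g % f) f⟩
  have hdeg : c.degree < f.degree :=
    (degree_le_of_dvd (EuclideanDomain.gcd_dvd_left _ _) hr).trans_lt (degree_mod_lt g hf)
  rw [hc, remConstCoeff_mk_of_degree_lt hdeg, coeff_zero_eq_eval_zero]
  intro hc0
  have hdvd := eval_dvd (x := 0) (EuclideanDomain.gcd_dvd_right (g % f) f)
  rw [hc0, zero_dvd_iff] at hdvd
  exact h0 hdvd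

theorem remForm_separatingLeft (h0 : f.eval 0 ≠ 0) : (remForm f).SeparatingLeft := by
  intro a ha
  by_contra hne
  obtain ⟨b, hb⟩ := exists_remConstCoeff_mul_ne_zero h0 hne
  exact hb (ha b)

theorem remForm_separatingRight (h0 : f.eval 0 ≠ 0) : (remForm f).SeparatingRight := by
  rw [← LinearMap.flip_separatingLeft, remForm_flip]
  exact remForm_separatingLeft h0

theorem remConstCoeff_mk_mul_contract [Fintype K] (h0 : f.eval 0 ≠ 0) (g h : K[X]) :
    remConstCoeff f (mk f (g * contract (Fintype.card K) (f ^ (Fintype.card K - 1) * h))) =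
      remConstCoeff f (mk f (g ^ Fintype.card K * h)) := by
  set q := Fintype.card K
  have hq : q ≠ 0 := Fintype.card_ne_zero
  have hf : f ≠ 0 := by rintro rfl; simp at h0
  obtain ⟨r, Q, hr, hdiv⟩ : ∃ r Q : K[X], r.degree < f.degree ∧ g ^ q * h = r + f * Q :=
    ⟨_, _, degree_mod_lt _ hf, (EuclideanDomain.mod_add_div _ _).symm⟩
  have hsplit :
      g * contract q (f ^ (q - 1) * h) = contract q (f ^ (q - 1) * r) + contract q Q * f :=
    calc g * contract q (f ^ (q - 1) * h) = contract q (f ^ (q - 1) * h * expand K q g) := by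
          rw [contract_mul_expand hq, mul_comm]
      _ = contract q (f ^ (q - 1) * r + Q * expand K q f) := by
          rw [FiniteField.expand_card, FiniteField.expand_card, ← pow_sub_one_mul hq f]
          congr 1
          linear_combination f ^ (q - 1) * hdiv
      _ = _ := by rw [contract_add hq, contract_mul_expand hq]
  rw [hsplit, hdiv, map_add, map_mul, mk_self, mul_zero, add_zero, map_add, map_mul, mk_self,
    zero_mul, add_zero, remConstCoeff_mk_of_degree_lt (degree_contract_pow_sub_one_mul_lt hq hr),
    remConstCoeff_mk_of_degree_lt hr, coeff_contract hq, zero_mul, mul_coeff_zero,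
    coeff_zero_eq_eval_zero, eval_pow, FiniteField.pow_card_sub_one_eq_one _ h0, one_mul]

end AdjoinRoot

open AdjoinRoot in
theorem frobenius_dual_to_G_general
    (Fq : Type) [Field Fq] [Fintype Fq]
    (ψ : Polynomial Fq →ₗ[Fq] Polynomial Fq)
    (hψ : ∀ (g : Polynomial Fq) (n : ℕ),
      (ψ g).coeff n = g.coeff (Fintype.card Fq * n))
    (f : Polynomial Fq) (h0 : f.eval 0 ≠ 0)
    (F : AdjoinRoot f →ₗ[Fq] AdjoinRoot f)
    (hF : ∀ y, F y = y ^ Fintype.card Fq)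
    (G : AdjoinRoot f →ₗ[Fq] AdjoinRoot f)
    (hG : ∀ h : Polynomial Fq,
      G (AdjoinRoot.mk f h) =
        AdjoinRoot.mk f (ψ (f ^ (Fintype.card Fq - 1) * h))) :
    ∃ B : AdjoinRoot f →ₗ[Fq] AdjoinRoot f →ₗ[Fq] Fq,
      (∀ a, (∀ b, B a b = 0) → a = 0) ∧
      (∀ b, (∀ a, B a b = 0) → b = 0) ∧
      ∀ a b, B (F a) b = B a (G b) := by
  have hψ_eq : ∀ g, ψ g = contract (Fintype.card Fq) g := fun g =>
    ext fun n => by rw [hψ, coeff_contract Fintype.card_ne_zero, mul_comm]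
  refine ⟨remForm f, remForm_separatingLeft h0, remForm_separatingRight h0, fun a b => ?_⟩
  obtain ⟨g, rfl⟩ := mk_surjective a
  obtain ⟨h, rfl⟩ := mk_surjective b
  rw [hF, hG, hψ_eq, remForm_apply, remForm_apply, ← map_pow, ← map_mul, ← map_mul,
    remConstCoeff_mk_mul_contract h0]

/-- For `f` with `f(0) ≠ 0`, there is a nondegenerate `F_q`-bilinear form on
`R = F_q[x]/(f)` with respect to which the Frobenius `F : h ↦ h^q` and the operator `G`
induced by `h ↦ ψ_q(f^{q-1}·h)` are dual to each other. -/
theorem frobenius_dual_to_G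
    (Fq : Type) [Field Fq] [Fintype Fq]
    (ψ : Polynomial Fq →ₗ[Fq] Polynomial Fq)
    (hψ : ∀ (g : Polynomial Fq) (n : ℕ),
      (ψ g).coeff n = g.coeff (Fintype.card Fq * n))
    (f : Polynomial Fq) (hd : 1 ≤ f.natDegree) (h0 : f.eval 0 ≠ 0)
    (F : AdjoinRoot f →ₗ[Fq] AdjoinRoot f)
    (hF : ∀ y, F y = y ^ Fintype.card Fq)
    (G : AdjoinRoot f →ₗ[Fq] AdjoinRoot f)
    (hG : ∀ h : Polynomial Fq,
      G (AdjoinRoot.mk f h) =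
        AdjoinRoot.mk f (ψ (f ^ (Fintype.card Fq - 1) * h))) :
    ∃ B : AdjoinRoot f →ₗ[Fq] AdjoinRoot f →ₗ[Fq] Fq,
      (∀ a, (∀ b, B a b = 0) → a = 0) ∧
      (∀ b, (∀ a, B a b = 0) → b = 0) ∧
      ∀ a b, B (F a) b = B a (G b) :=
  frobenius_dual_to_G_general Fq ψ hψ f h0 F hF G hG
end

section
/- (Proposition 4.1) Let f ∈ F_q[x_1, …, x_n] be a polynomial of total degree at most d. Let ψ_q be the F_q-linear map on F_q[x_1, …, x_n] determined on monomials by ψ_q(x^u) = x^{u/q} if q divides every component of the exponent vector u, and ψ_q(x^u) = 0 otherwise. Let R(d) be the F_q-subspace of F_q[x_1, …, x_n] spanned by the monomials x^u with ∑_i u_i ≤ d and u_i ≥ 1 for all i (i.e., monomials of degree at most d divisible by x_1⋯x_n). Then for every h ∈ R(d), one has ψ_q(f^{q-1}·h) ∈ R(d); that is, the operator ψ_q ∘ f^{q-1} is stable on R(d). -/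
/-!
By linearity it suffices to take `h = x^u` with `|u| ≤ d` and all `u_i ≥ 1`. With `q = |F_q|`,
a monomial `x^v` of `ψ_q (f^{q-1} x^u)` comes from a monomial `x^w` of `f^{q-1}` with
`w + u = q v`. As `|w| ≤ (q-1) d`, this gives `q |v| ≤ q d`; and `v_i = 0` would force `u_i = 0`.
-/

/-- `R(d)`: the `F_q`-subspace of `F_q[x_1, …, x_n]` spanned by the monomials of total
degree at most `d` that are divisible by `x_1⋯x_n`. -/
noncomputable def Rspace (Fq : Type) [Field Fq] (n d : ℕ) :
    Submodule Fq (MvPolynomial (Fin n) Fq) :=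
  Submodule.span Fq
    {m | ∃ u : Fin n →₀ ℕ,
      (∑ i, u i) ≤ d ∧ (∀ i, 1 ≤ u i) ∧ m = MvPolynomial.monomial u (1 : Fq)}

open MvPolynomial

lemma MvPolynomial.exists_add_eq_of_mem_support_mul_monomial {σ R : Type*} [CommSemiring R]
    {p : MvPolynomial σ R} {u m : σ →₀ ℕ} {r : R} (hm : m ∈ (p * monomial u r).support) :
    ∃ w ∈ p.support, w + u = m := by
  classical
  obtain ⟨w, hw, u', hu', rfl⟩ := Finset.mem_add.mp (support_mul _ _ hm)
  obtain rfl := Finset.mem_singleton.mp (support_monomial_subset hu')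
  exact ⟨w, hw, rfl⟩

lemma Finsupp.degree_le_of_add_eq_nsmul {σ : Type*} {q d : ℕ} (hq : 0 < q)
    {w u v : σ →₀ ℕ} (h : w + u = q • v) (hw : w.degree ≤ (q - 1) * d) (hu : u.degree ≤ d) :
    v.degree ≤ d := by
  refine Nat.le_of_mul_le_mul_left ?_ hq
  calc q * v.degree = w.degree + u.degree := by rw [← smul_eq_mul, ← map_nsmul, ← h, map_add]
    _ ≤ (q - 1) * d + d := add_le_add hw hu
    _ = q * d := by rw [Nat.sub_one_mul, Nat.sub_add_cancel (Nat.le_mul_of_pos_left d hq)]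

lemma Finsupp.pos_of_add_eq_nsmul {σ : Type*} {q : ℕ} {w u v : σ →₀ ℕ} (h : w + u = q • v)
    {i : σ} (hu : 0 < u i) : 0 < v i := by
  have hi := DFunLike.congr_fun h i
  simp only [Finsupp.add_apply, Finsupp.smul_apply, smul_eq_mul] at hi
  exact Nat.pos_of_ne_zero fun hv => by rw [hv, mul_zero] at hi; omega

lemma mem_Rspace_of_forall_mem_support {Fq : Type} [Field Fq] {n d : ℕ}
    {g : MvPolynomial (Fin n) Fq} (hg : ∀ v ∈ g.support, v.degree ≤ d ∧ ∀ i, 1 ≤ v i) :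
    g ∈ Rspace Fq n d := by
  rw [← support_sum_monomial_coeff g]
  refine Submodule.sum_mem _ fun v hv => ?_
  rw [← mul_one (coeff v g), ← smul_eq_mul, ← smul_monomial]
  obtain ⟨hvd, hv1⟩ := hg v hv
  exact Submodule.smul_mem _ _
    (Submodule.subset_span ⟨v, Finsupp.degree_eq_sum v ▸ hvd, hv1, rfl⟩)

lemma psi_mul_monomial_mem_Rspace {Fq : Type} [Field Fq] {n d q : ℕ} (hq : 0 < q)
    {ψ : MvPolynomial (Fin n) Fq → MvPolynomial (Fin n) Fq}
    (hψ : ∀ g u, coeff u (ψ g) = coeff (q • u) g) {g : MvPolynomial (Fin n) Fq}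
    (hg : g.totalDegree ≤ (q - 1) * d) {u : Fin n →₀ ℕ} (hud : u.degree ≤ d)
    (hu : ∀ i, 1 ≤ u i) :
    ψ (g * monomial u 1) ∈ Rspace Fq n d := by
  refine mem_Rspace_of_forall_mem_support fun v hv => ?_
  rw [mem_support_iff, hψ, ← mem_support_iff] at hv
  obtain ⟨w, hw, hwu⟩ := exists_add_eq_of_mem_support_mul_monomial hv
  exact ⟨Finsupp.degree_le_of_add_eq_nsmul hq hwu ((le_totalDegree hw).trans hg) hud,
    fun i => Finsupp.pos_of_add_eq_nsmul hwu (hu i)⟩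

/-- (Proposition 4.1) For `f ∈ F_q[x_1, …, x_n]` of total degree at most `d`, the operator
`ψ_q ∘ f^{q-1}` is stable on `R(d)`, where `ψ_q` is determined by
`coeff u (ψ_q g) = coeff (q•u) g`. -/
theorem psi_q_mul_pow_stable_on_Rspace
    (Fq : Type) [Field Fq] [Fintype Fq] (n d : ℕ)
    (ψ : MvPolynomial (Fin n) Fq →ₗ[Fq] MvPolynomial (Fin n) Fq)
    (hψ : ∀ (g : MvPolynomial (Fin n) Fq) (u : Fin n →₀ ℕ),
      MvPolynomial.coeff u (ψ g) = MvPolynomial.coeff (Fintype.card Fq • u) g)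
    (f : MvPolynomial (Fin n) Fq) (hf : f.totalDegree ≤ d)
    (h : MvPolynomial (Fin n) Fq) (hh : h ∈ Rspace Fq n d) :
    ψ (f ^ (Fintype.card Fq - 1) * h) ∈ Rspace Fq n d := by
  have hq : 0 < Fintype.card Fq := Fintype.card_pos
  have hpow : (f ^ (Fintype.card Fq - 1)).totalDegree ≤ (Fintype.card Fq - 1) * d :=
    (totalDegree_pow f _).trans (Nat.mul_le_mul_left _ hf)
  suffices Rspace Fq n d ≤
      (Rspace Fq n d).comap (ψ ∘ₗ LinearMap.mulLeft Fq (f ^ (Fintype.card Fq - 1))) from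
    this hh
  refine Submodule.span_le.mpr ?_
  rintro _ ⟨u, hud, hu, rfl⟩
  exact psi_mul_monomial_mem_Rspace hq hψ hpow (by rwa [Finsupp.degree_eq_sum]) hu
end
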